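/- arXiv:1603.03191 — 6 statements merged into one kernel-verified Lean document; each statement's English description precedes it below -/
import Mathlib

section
/- Fix a prime p and a divisor D given by points 0 < λ_0 < … < λ_{n−1} < pλ_0 and elements a_0, …, a_{n−1} ∈ H_p; write D(λ) := a_j·λ_j if λ = λ_j and D(λ) := 0 for all other λ ∈ [λ_0, pλ_0). Say f ∈ K(C_p) solves the Riemann–Roch problem for D if D(λ) + Ord_λ(f) ≥ 0 for every λ ∈ [λ_0, pλ_0). Then: (i) if Σ_j a_j·λ_j < 0, no f ∈ K(C_p) solves the problem; (ii) if Σ_j a_j·λ_j > 0, some f ∈ K(C_p) solves the problem. -/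
/-!
(i) Let `f ∈ K(C_p)` and subdivide `[λ₀, pλ₀]` as `t₀ < ⋯ < t_{k+1}` with slopes `sᵢ` on the
pieces. The order at `tᵢ` is `tᵢ (sᵢ - sᵢ₋₁)`, where at `t₀` periodicity makes the left slope
`p s_k`; summation by parts turns the sum of these orders into `f(λ₀) - f(pλ₀) = 0`, and the
order vanishes off the `tᵢ`. Summing `D + Ord(f) ≥ 0` over the support of `D` and `Ord(f) ≥ 0`
over the remaining break points gives `deg D ≥ 0`.

(ii) If `deg D > 0`, take on `[λ₀, pλ₀]` the continuous function with slope `σ - a₀` at `λ₀`,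
slope changes `-a_j` at `λ_j` for `j ≥ 1` and `η > 0` at one more point `x ∈ (λ_{n-1}, pλ₀)`,
and extend it by `f(pλ) = f(λ)`. Its order cancels `D` at `λ_j` for `j ≥ 1`, is `ηx` at `x`,
and `D(λ₀) + Ord_{λ₀}(f) = deg D - ηx`. Density of `H_p` in `ℝ` gives `σ, η ∈ H_p` and `x` with
`ηx < deg D` for which the function takes the same value at `λ₀` and `pλ₀`.
-/

/-- The set `H_p = ℤ[1/p] = {a / p^n : a ∈ ℤ, n ∈ ℕ}` inside `ℝ`. -/
def HpSet (p : ℕ) : Set ℝ := {x : ℝ | ∃ (a : ℤ) (n : ℕ), x = (a : ℝ) / (p : ℝ) ^ n}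

/-- `f` is piecewise affine on `(0,∞)` with all slopes in `S`. -/
def PiecewiseAffineWith (S : Set ℝ) (f : ℝ → ℝ) : Prop :=
  ∀ u v : ℝ, 0 < u → u < v →
    ∃ (n : ℕ) (t : ℕ → ℝ), 0 < n ∧ t 0 = u ∧ t n = v ∧ (∀ i < n, t i < t (i + 1)) ∧
      ∀ i < n, ∃ s ∈ S, ∃ c : ℝ, ∀ x ∈ Set.Icc (t i) (t (i + 1)), f x = s * x + c

/-- `K(C_p)`: continuous piecewise affine functions on `(0,∞)` with slopes in `H_p` satisfying
`f(pλ) = f(λ)`. -/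
def KCp (p : ℕ) (f : ℝ → ℝ) : Prop :=
  ContinuousOn f (Set.Ioi 0) ∧ PiecewiseAffineWith (HpSet p) f ∧
    ∀ lam : ℝ, 0 < lam → f (p * lam) = f lam

/-- `f` has right-hand slope `s` at `x`. -/
def HasRightSlope (f : ℝ → ℝ) (x s : ℝ) : Prop :=
  ∃ δ : ℝ, 0 < δ ∧ ∀ y ∈ Set.Ico x (x + δ), f y = f x + s * (y - x)

/-- `f` has left-hand slope `s` at `x`. -/
def HasLeftSlope (f : ℝ → ℝ) (x s : ℝ) : Prop :=
  ∃ δ : ℝ, 0 < δ ∧ ∀ y ∈ Set.Ioc (x - δ) x, f y = f x + s * (y - x)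

/-- The order of `f` at `λ` is `d = λ (f'₊(λ) − f'₋(λ))`. -/
def HasOrdAt (f : ℝ → ℝ) (lam d : ℝ) : Prop :=
  ∃ sp sm : ℝ, HasRightSlope f lam sp ∧ HasLeftSlope f lam sm ∧ d = lam * (sp - sm)

/-- `f` solves the Riemann–Roch problem for the divisor `D` with support
`{λ_0, …, λ_{n−1}} ⊆ [λ_0, pλ_0)` and values `D(λ_j) = a_j λ_j`:
`D(λ) + Ord_λ(f) ≥ 0` for every `λ` in the fundamental domain `[λ_0, pλ_0)`. -/
def SolvesRR (p : ℕ) (n : ℕ) (lam a : ℕ → ℝ) (f : ℝ → ℝ) : Prop :=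
  (∀ j, j < n → ∀ d : ℝ, HasOrdAt f (lam j) d → 0 ≤ a j * lam j + d) ∧
  (∀ x ∈ Set.Ico (lam 0) ((p : ℝ) * lam 0),
    (∀ j, j < n → x ≠ lam j) → ∀ d : ℝ, HasOrdAt f x d → 0 ≤ d)

open Set Filter Topology

theorem add_mem_hpSet {p : ℕ} (hp : p ≠ 0) {x y : ℝ} (hx : x ∈ HpSet p) (hy : y ∈ HpSet p) :
    x + y ∈ HpSet p := by
  obtain ⟨a, m, rfl⟩ := hx
  obtain ⟨b, k, rfl⟩ := hy
  have hp' : (p : ℝ) ≠ 0 := by exact_mod_cast hp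
  refine ⟨a * p ^ k + b * p ^ m, m + k, ?_⟩
  push_cast
  field_simp
  ring

def hpAddSubgroup (p : ℕ) (hp : p ≠ 0) : AddSubgroup ℝ where
  carrier := HpSet p
  zero_mem' := ⟨0, 0, by simp⟩
  add_mem' := add_mem_hpSet hp
  neg_mem' := by
    rintro _ ⟨a, m, rfl⟩
    exact ⟨-a, m, by push_cast; ring⟩

theorem div_zpow_mem_hpSet {p : ℕ} {x : ℝ} (hx : x ∈ HpSet p) (k : ℤ) :
    x / (p : ℝ) ^ k ∈ HpSet p := by
  obtain ⟨a, m, rfl⟩ := hx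
  rcases k with k | k
  · exact ⟨a, m + k, by rw [Int.ofNat_eq_natCast, zpow_natCast, div_div, pow_add]⟩
  · exact ⟨a * p ^ (k + 1), m, by rw [zpow_negSucc, div_inv_eq_mul]; push_cast; ring⟩

theorem exists_mem_hpSet_Ioo {p : ℕ} (hp : 1 < p) {u v : ℝ} (huv : u < v) :
    ∃ w ∈ HpSet p, w ∈ Ioo u v := by
  obtain ⟨m, hm⟩ := pow_unbounded_of_one_lt (v - u)⁻¹ (by exact_mod_cast hp : (1 : ℝ) < p)
  have hpm : (0 : ℝ) < (p : ℝ) ^ m := by positivity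
  have hgap : 1 < (p : ℝ) ^ m * (v - u) := by
    rw [inv_lt_iff_one_lt_mul₀ (sub_pos.2 huv)] at hm
    linarith
  refine ⟨((⌊(p : ℝ) ^ m * u⌋ + 1 : ℤ) : ℝ) / (p : ℝ) ^ m, ⟨_, m, rfl⟩, ?_, ?_⟩
  · rw [lt_div_iff₀ hpm]
    push_cast
    linarith [Int.lt_floor_add_one ((p : ℝ) ^ m * u)]
  · rw [div_lt_iff₀ hpm]
    push_cast
    nlinarith [Int.floor_le ((p : ℝ) ^ m * u)]

section OneSidedSlopes

variable {f g : ℝ → ℝ} {x s r : ℝ}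

theorem hasRightSlope_iff :
    HasRightSlope f x s ↔ ∀ᶠ y in 𝓝[≥] x, f y = f x + s * (y - x) := by
  rw [eventually_iff, mem_nhdsGE_iff_exists_Ico_subset]
  constructor
  · rintro ⟨δ, hδ, h⟩
    exact ⟨x + δ, lt_add_of_pos_right x hδ, h⟩
  · rintro ⟨w, hw, h⟩
    exact ⟨w - x, sub_pos.2 hw, by rwa [add_sub_cancel]⟩

theorem hasLeftSlope_iff :
    HasLeftSlope f x s ↔ ∀ᶠ y in 𝓝[≤] x, f y = f x + s * (y - x) := by
  rw [eventually_iff, mem_nhdsLE_iff_exists_Ioc_subset]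
  constructor
  · rintro ⟨δ, hδ, h⟩
    exact ⟨x - δ, sub_lt_self x hδ, h⟩
  · rintro ⟨l, hl, h⟩
    exact ⟨x - l, sub_pos.2 hl, by rwa [sub_sub_cancel]⟩

theorem HasRightSlope.unique (hs : HasRightSlope f x s) (hr : HasRightSlope f x r) : s = r := by
  rw [hasRightSlope_iff] at hs hr
  obtain ⟨y, ⟨hys, hyr⟩, hxy : x < y⟩ :=
    (((hs.and hr).filter_mono (nhdsWithin_mono x Ioi_subset_Ici_self)).and
      eventually_mem_nhdsWithin).exists
  exact mul_right_cancel₀ (sub_ne_zero.2 hxy.ne') (add_left_cancel (hys.symm.trans hyr))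

theorem HasLeftSlope.unique (hs : HasLeftSlope f x s) (hr : HasLeftSlope f x r) : s = r := by
  rw [hasLeftSlope_iff] at hs hr
  obtain ⟨y, ⟨hys, hyr⟩, hyx : y < x⟩ :=
    (((hs.and hr).filter_mono (nhdsWithin_mono x Iio_subset_Iic_self)).and
      eventually_mem_nhdsWithin).exists
  exact mul_right_cancel₀ (sub_ne_zero.2 hyx.ne) (add_left_cancel (hys.symm.trans hyr))

theorem HasOrdAt.unique {d e : ℝ} (hd : HasOrdAt f x d) (he : HasOrdAt f x e) : d = e := by
  obtain ⟨sp, sm, hp, hm, rfl⟩ := hd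
  obtain ⟨sp', sm', hp', hm', rfl⟩ := he
  rw [hp.unique hp', hm.unique hm']

theorem HasRightSlope.congr (h : HasRightSlope f x s) (hfg : f =ᶠ[𝓝[≥] x] g) :
    HasRightSlope g x s := by
  rw [hasRightSlope_iff] at *
  filter_upwards [h, hfg] with y hy hfgy
  rw [← hfgy, ← hfg.eq_of_nhdsWithin self_mem_Ici, hy]

theorem HasLeftSlope.congr (h : HasLeftSlope f x s) (hfg : f =ᶠ[𝓝[≤] x] g) :
    HasLeftSlope g x s := by
  rw [hasLeftSlope_iff] at *
  filter_upwards [h, hfg] with y hy hfgy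
  rw [← hfgy, ← hfg.eq_of_nhdsWithin self_mem_Iic, hy]

theorem HasOrdAt.congr {d : ℝ} (h : HasOrdAt f x d) (hfg : f =ᶠ[𝓝 x] g) : HasOrdAt g x d := by
  obtain ⟨sp, sm, hp, hm, rfl⟩ := h
  exact ⟨sp, sm, hp.congr (hfg.filter_mono nhdsWithin_le_nhds),
    hm.congr (hfg.filter_mono nhdsWithin_le_nhds), rfl⟩

theorem HasRightSlope.add (hf : HasRightSlope f x s) (hg : HasRightSlope g x r) :
    HasRightSlope (fun y => f y + g y) x (s + r) := by
  rw [hasRightSlope_iff] at *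
  filter_upwards [hf, hg] with y hfy hgy
  rw [hfy, hgy]
  ring

theorem HasLeftSlope.add (hf : HasLeftSlope f x s) (hg : HasLeftSlope g x r) :
    HasLeftSlope (fun y => f y + g y) x (s + r) := by
  rw [hasLeftSlope_iff] at *
  filter_upwards [hf, hg] with y hfy hgy
  rw [hfy, hgy]
  ring

theorem hasRightSlope_sum {ι : Type*} (I : Finset ι) {F : ι → ℝ → ℝ} {σ : ι → ℝ}
    (h : ∀ i ∈ I, HasRightSlope (F i) x (σ i)) :
    HasRightSlope (fun y => ∑ i ∈ I, F i y) x (∑ i ∈ I, σ i) := by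
  simp only [hasRightSlope_iff] at *
  filter_upwards [(eventually_all_finset I).2 h] with y hy
  rw [Finset.sum_congr rfl hy, Finset.sum_add_distrib, Finset.sum_mul]

theorem hasLeftSlope_sum {ι : Type*} (I : Finset ι) {F : ι → ℝ → ℝ} {σ : ι → ℝ}
    (h : ∀ i ∈ I, HasLeftSlope (F i) x (σ i)) :
    HasLeftSlope (fun y => ∑ i ∈ I, F i y) x (∑ i ∈ I, σ i) := by
  simp only [hasLeftSlope_iff] at *
  filter_upwards [(eventually_all_finset I).2 h] with y hy
  rw [Finset.sum_congr rfl hy, Finset.sum_add_distrib, Finset.sum_mul]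

theorem hasRightSlope_linear (s w x : ℝ) : HasRightSlope (fun y => s * (y - w)) x s :=
  ⟨1, one_pos, fun _ _ => by ring⟩

theorem hasLeftSlope_linear (s w x : ℝ) : HasLeftSlope (fun y => s * (y - w)) x s :=
  ⟨1, one_pos, fun _ _ => by ring⟩

theorem hasRightSlope_hinge (c w x : ℝ) :
    HasRightSlope (fun y => c * max 0 (y - w)) x (if w ≤ x then c else 0) := by
  rw [hasRightSlope_iff]
  split_ifs with h
  · filter_upwards [self_mem_nhdsWithin] with y (hy : x ≤ y)
    rw [max_eq_right (by linarith), max_eq_right (by linarith)]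
    ring
  · filter_upwards [nhdsWithin_le_nhds (Iio_mem_nhds (not_le.1 h))] with y (hy : y < w)
    rw [max_eq_left (by linarith), max_eq_left (by linarith)]
    ring

theorem hasLeftSlope_hinge (c w x : ℝ) :
    HasLeftSlope (fun y => c * max 0 (y - w)) x (if w < x then c else 0) := by
  rw [hasLeftSlope_iff]
  split_ifs with h
  · filter_upwards [nhdsWithin_le_nhds (Ioi_mem_nhds h)] with y (hy : w < y)
    rw [max_eq_right (by linarith), max_eq_right (by linarith)]
    ring
  · filter_upwards [self_mem_nhdsWithin] with y (hy : y ≤ x)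
    rw [max_eq_left (by linarith), max_eq_left (by linarith)]
    ring

theorem hasRightSlope_of_eqOn_Icc {a b c : ℝ} (h : ∀ y ∈ Icc a b, f y = s * y + c)
    (hx : x ∈ Ico a b) : HasRightSlope f x s := by
  rw [hasRightSlope_iff]
  filter_upwards [Icc_mem_nhdsGE_of_mem hx] with y hy
  rw [h y hy, h x (Ico_subset_Icc_self hx)]
  ring

theorem hasLeftSlope_of_eqOn_Icc {a b c : ℝ} (h : ∀ y ∈ Icc a b, f y = s * y + c)
    (hx : x ∈ Ioc a b) : HasLeftSlope f x s := by
  rw [hasLeftSlope_iff]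
  filter_upwards [Icc_mem_nhdsLE_of_mem hx] with y hy
  rw [h y hy, h x (Ioc_subset_Icc_self hx)]
  ring

theorem HasLeftSlope.of_mul_periodic {c : ℝ} (hc : 0 < c)
    (hper : ∀ y, 0 < y → f (c * y) = f y) (hx : 0 < x) (h : HasLeftSlope f (c * x) s) :
    HasLeftSlope f x (c * s) := by
  rw [hasLeftSlope_iff] at *
  have hmul : Tendsto (fun y => c * y) (𝓝[≤] x) (𝓝[≤] (c * x)) :=
    (continuous_const_mul c).continuousWithinAt.tendsto_nhdsWithin
      fun y (hy : y ≤ x) => mul_le_mul_of_nonneg_left hy hc.le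
  filter_upwards [hmul.eventually h, nhdsWithin_le_nhds (Ioi_mem_nhds hx)] with y hy (hy0 : 0 < y)
  rw [← hper y hy0, hy, hper x hx]
  ring

end OneSidedSlopes

theorem Finset.sum_le_sum_of_eq_zero_of_nonneg {ι M : Type*} [AddCommMonoid M] [PartialOrder M]
    [IsOrderedAddMonoid M] [DecidableEq ι] {A B : Finset ι} {φ : ι → M}
    (hA : ∀ z ∈ A, z ∉ B → φ z = 0) (hB : ∀ z ∈ B, z ∉ A → 0 ≤ φ z) :
    ∑ z ∈ A, φ z ≤ ∑ z ∈ B, φ z :=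
  calc ∑ z ∈ A, φ z = ∑ z ∈ A ∩ B, φ z :=
        (Finset.sum_subset Finset.inter_subset_left fun z hzA hz =>
          hA z hzA fun hzB => hz (Finset.mem_inter.2 ⟨hzA, hzB⟩)).symm
    _ ≤ ∑ z ∈ B, φ z :=
        Finset.sum_le_sum_of_subset_of_nonneg Finset.inter_subset_right fun z hzB hz =>
          hB z hzB fun hzA => hz (Finset.mem_inter.2 ⟨hzA, hzB⟩)

theorem strictMonoOn_Iio_of_lt_succ {α : Type*} [Preorder α] {ψ : ℕ → α} {n : ℕ}
    (hψ : ∀ j, j + 1 < n → ψ j < ψ (j + 1)) : StrictMonoOn ψ (Iio n) :=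
  strictMonoOn_of_lt_succ ordConnected_Iio fun j _ _ hj => hψ j hj

theorem exists_mem_Ico_succ (t : ℕ → ℝ) {m : ℕ} {z : ℝ} (hz : z ∈ Ico (t 0) (t m)) :
    ∃ i < m, z ∈ Ico (t i) (t (i + 1)) := by
  induction m with
  | zero => exact absurd hz.2 (not_lt.2 hz.1)
  | succ k ih =>
    by_cases hk : z < t k
    · obtain ⟨i, hi, h⟩ := ih ⟨hz.1, hk⟩
      exact ⟨i, by omega, h⟩
    · exact ⟨k, by omega, not_lt.1 hk, hz.2⟩

theorem sum_range_mul_sub_add_sum_range_mul_sub (t s : ℕ → ℝ) (k : ℕ) :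
    ∑ i ∈ Finset.range k, t (i + 1) * (s (i + 1) - s i) +
        ∑ i ∈ Finset.range (k + 1), s i * (t (i + 1) - t i) =
      t (k + 1) * s k - t 0 * s 0 := by
  induction k with
  | zero => simp; ring
  | succ k ih =>
    rw [Finset.sum_range_succ, Finset.sum_range_succ _ (k + 1)]
    linear_combination ih

section AffinePartition

variable {f : ℝ → ℝ} {t s e : ℕ → ℝ} {k : ℕ}

theorem hasOrdAt_zero_of_mem_Ico
    (he : ∀ i < k + 1, ∀ y ∈ Icc (t i) (t (i + 1)), f y = s i * y + e i) {z : ℝ}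
    (hz : z ∈ Ico (t 0) (t (k + 1))) (hzt : ∀ i < k + 1, t i ≠ z) : HasOrdAt f z 0 := by
  obtain ⟨i, hi, hzi⟩ := exists_mem_Ico_succ t hz
  exact ⟨s i, s i, hasRightSlope_of_eqOn_Icc (he i hi) hzi,
    hasLeftSlope_of_eqOn_Icc (he i hi) ⟨lt_of_le_of_ne hzi.1 (hzt i hi), hzi.2.le⟩, by ring⟩

theorem hasOrdAt_of_mul_periodic (ht : ∀ i < k + 1, t i < t (i + 1))
    (he : ∀ i < k + 1, ∀ y ∈ Icc (t i) (t (i + 1)), f y = s i * y + e i) {c : ℝ} (hc : 0 < c)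
    (hper : ∀ y, 0 < y → f (c * y) = f y) (ht0 : 0 < t 0) (htk : t (k + 1) = c * t 0) {i : ℕ}
    (hi : i < k + 1) :
    HasOrdAt f (t i) (t i * (s i - if i = 0 then c * s k else s (i - 1))) := by
  refine ⟨s i, _, hasRightSlope_of_eqOn_Icc (he i hi) (left_mem_Ico.2 (ht i hi)), ?_, rfl⟩
  rcases i with _ | i
  · have h := hasLeftSlope_of_eqOn_Icc (he k k.lt_succ_self) (right_mem_Ioc.2 (ht k k.lt_succ_self))
    rw [htk] at h
    simpa using h.of_mul_periodic hc hper ht0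
  · simpa using hasLeftSlope_of_eqOn_Icc (he i (by omega)) (right_mem_Ioc.2 (ht i (by omega)))

/-- The jump at `t 0` is taken against the left slope `c * s k` that periodicity transports
from `t (k + 1) = c * t 0`. -/
theorem sum_slope_jumps_eq_zero (ht : ∀ i < k + 1, t i < t (i + 1))
    (he : ∀ i < k + 1, ∀ y ∈ Icc (t i) (t (i + 1)), f y = s i * y + e i) {c : ℝ}
    (htk : t (k + 1) = c * t 0) (hper : f (t (k + 1)) = f (t 0)) :
    ∑ i ∈ Finset.range (k + 1), t i * (s i - if i = 0 then c * s k else s (i - 1)) = 0 := by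
  have hincr : ∀ i ∈ Finset.range (k + 1), s i * (t (i + 1) - t i) = f (t (i + 1)) - f (t i) := by
    intro i hi
    have hi := Finset.mem_range.1 hi
    rw [he i hi _ ⟨le_rfl, (ht i hi).le⟩, he i hi _ ⟨(ht i hi).le, le_rfl⟩]
    ring
  have htele : ∑ i ∈ Finset.range (k + 1), s i * (t (i + 1) - t i) = 0 := by
    rw [Finset.sum_congr rfl hincr, Finset.sum_range_sub (fun i => f (t i)), hper, sub_self]
  rw [Finset.sum_range_succ']
  simp only [Nat.add_sub_cancel, Nat.succ_ne_zero, if_false, if_true]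
  linear_combination sum_range_mul_sub_add_sum_range_mul_sub t s k - htele + s k * htk

end AffinePartition

theorem exists_sum_ord_eq_zero {S : Set ℝ} {f : ℝ → ℝ} {c u : ℝ} (hc : 1 < c) (hu : 0 < u)
    (hpw : PiecewiseAffineWith S f) (hper : ∀ y, 0 < y → f (c * y) = f y) :
    ∃ ord : ℝ → ℝ, (∀ z ∈ Ico u (c * u), HasOrdAt f z (ord z)) ∧
      ∃ B : Finset ℝ, ↑B ⊆ Ico u (c * u) ∧ (∀ z ∈ Ico u (c * u), z ∉ B → ord z = 0) ∧
        ∑ z ∈ B, ord z = 0 := by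
  classical
  obtain ⟨m, t, hm, rfl, htm, ht, haff⟩ := hpw u (c * u) hu (by nlinarith)
  obtain ⟨k, rfl⟩ : ∃ k, m = k + 1 := ⟨m - 1, by omega⟩
  choose! s _ e he using haff
  have htmono : StrictMonoOn t (Iic (k + 1)) := strictMonoOn_Iic_of_lt_succ fun i hi => ht i hi
  have ht_mem : ∀ i < k + 1, t i ∈ Ico (t 0) (c * t 0) := fun i hi =>
    ⟨htmono.monotoneOn (by simp) (by simp; omega) (Nat.zero_le i),
      htm ▸ htmono (by simp; omega) (by simp) hi⟩
  have hd := fun i (hi : i < k + 1) => hasOrdAt_of_mul_periodic ht he (by linarith) hper hu htm hi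
  have hd_zero : ∀ z ∈ Ico (t 0) (c * t 0), (∀ i < k + 1, t i ≠ z) → HasOrdAt f z 0 :=
    fun z hz => hasOrdAt_zero_of_mem_Ico he (htm ▸ hz)
  have hex : ∀ z ∈ Ico (t 0) (c * t 0), ∃ d, HasOrdAt f z d := by
    intro z hz
    by_cases h : ∃ i < k + 1, t i = z
    · obtain ⟨i, hi, rfl⟩ := h
      exact ⟨_, hd i hi⟩
    · push Not at h
      exact ⟨0, hd_zero z hz h⟩
  choose! ord hord using hex
  refine ⟨ord, hord, (Finset.range (k + 1)).image t, ?_, ?_, ?_⟩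
  · simpa [Set.subset_def] using ht_mem
  · intro z hz hzB
    refine (hord z hz).unique (hd_zero z hz fun i hi h => hzB ?_)
    exact Finset.mem_image.2 ⟨i, Finset.mem_range.2 hi, h⟩
  · rw [Finset.sum_image (htmono.injOn.mono fun i hi => by simp at hi ⊢; omega),
      Finset.sum_congr rfl fun i hi => (hord _ (ht_mem i (Finset.mem_range.1 hi))).unique
        (hd i (Finset.mem_range.1 hi))]
    exact sum_slope_jumps_eq_zero ht he htm (by rw [htm, hper _ hu])
theorem not_solvesRR_of_deg_neg {p n : ℕ} (hp : 1 < p) {lam a : ℕ → ℝ} (hlam0 : 0 < lam 0)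
    (hmono : ∀ j, j + 1 < n → lam j < lam (j + 1)) (hlt : lam (n - 1) < p * lam 0)
    (hdeg : ∑ j ∈ Finset.range n, a j * lam j < 0) {f : ℝ → ℝ} (hf : KCp p f) :
    ¬ SolvesRR p n lam a f := by
  classical
  rintro ⟨hRR, hRR'⟩
  obtain ⟨ord, hord, B, hBsub, hB0, hBsum⟩ :=
    exists_sum_ord_eq_zero (by exact_mod_cast hp) hlam0 hf.2.1 hf.2.2
  have hlam := strictMonoOn_Iio_of_lt_succ hmono
  have hlam_mem : ∀ j < n, lam j ∈ Ico (lam 0) (p * lam 0) := fun j hj =>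
    ⟨hlam.monotoneOn (by simp; omega) hj (Nat.zero_le j),
      (hlam.monotoneOn hj (by simp; omega) (by omega)).trans_lt hlt⟩
  have hRR_sum : 0 ≤ ∑ j ∈ Finset.range n, (a j * lam j + ord (lam j)) :=
    Finset.sum_nonneg fun j hj =>
      hRR j (Finset.mem_range.1 hj) _ (hord _ (hlam_mem j (Finset.mem_range.1 hj)))
  have hord_sum : ∑ j ∈ Finset.range n, ord (lam j) ≤ 0 := by
    rw [← Finset.sum_image (hlam.injOn.mono fun j hj => Finset.mem_range.1 hj), ← hBsum]
    refine Finset.sum_le_sum_of_eq_zero_of_nonneg (fun z hz hzB => ?_) fun z hz hzΛ => ?_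
    · obtain ⟨j, hj, rfl⟩ := Finset.mem_image.1 hz
      exact hB0 _ (hlam_mem j (Finset.mem_range.1 hj)) hzB
    · refine hRR' z (hBsub hz) (fun j hj h => hzΛ ?_) _ (hord z (hBsub hz))
      exact Finset.mem_image.2 ⟨j, Finset.mem_range.2 hj, h.symm⟩
  rw [Finset.sum_add_distrib] at hRR_sum
  linarith

def AffineOnWith (S : Set ℝ) (f : ℝ → ℝ) (a b : ℝ) : Prop :=
  ∃ s ∈ S, ∃ c : ℝ, ∀ x ∈ Icc a b, f x = s * x + c

/-- `PiecewiseAffineWith S f` says exactly `HasAffinePartition S f u v` for all `0 < u < v`. -/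
def HasAffinePartition (S : Set ℝ) (f : ℝ → ℝ) (u v : ℝ) : Prop :=
  ∃ (n : ℕ) (t : ℕ → ℝ), 0 < n ∧ t 0 = u ∧ t n = v ∧ (∀ i < n, t i < t (i + 1)) ∧
    ∀ i < n, AffineOnWith S f (t i) (t (i + 1))

section AffinePieces

variable {G : Type*} [SetLike G ℝ] {H : G} {S : Set ℝ} {f g : ℝ → ℝ} {a b u v w : ℝ}

theorem affineOnWith_linear [AddSubmonoidClass G ℝ] {s : ℝ} (hs : s ∈ H) (w : ℝ) :
    AffineOnWith H (fun y => s * (y - w)) a b :=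
  ⟨s, hs, -(s * w), fun _ _ => by ring⟩

theorem affineOnWith_hinge [AddSubmonoidClass G ℝ] {c : ℝ} (hc : c ∈ H) (hw : w ∉ Ioo a b) :
    AffineOnWith H (fun y => c * max 0 (y - w)) a b := by
  by_cases hwa : w ≤ a
  · exact ⟨c, hc, -(c * w), fun y hy => by dsimp only; rw [max_eq_right (by linarith [hy.1])]; ring⟩
  · have hbw : b ≤ w := not_lt.1 fun h => hw ⟨not_le.1 hwa, h⟩
    exact ⟨0, zero_mem H, 0, fun y hy => by dsimp only; rw [max_eq_left (by linarith [hy.2])]; ring⟩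

theorem AffineOnWith.add [AddSubmonoidClass G ℝ] (hf : AffineOnWith H f a b)
    (hg : AffineOnWith H g a b) : AffineOnWith H (fun y => f y + g y) a b := by
  obtain ⟨s, hs, c, hf⟩ := hf
  obtain ⟨r, hr, e, hg⟩ := hg
  exact ⟨s + r, add_mem hs hr, c + e, fun y hy => by dsimp only; rw [hf y hy, hg y hy]; ring⟩

theorem affineOnWith_sum [AddSubmonoidClass G ℝ] {ι : Type*} (I : Finset ι) {F : ι → ℝ → ℝ}
    (h : ∀ i ∈ I, AffineOnWith H (F i) a b) :
    AffineOnWith H (fun y => ∑ i ∈ I, F i y) a b := by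
  choose! s hs c hc using h
  exact ⟨∑ i ∈ I, s i, sum_mem hs, ∑ i ∈ I, c i, fun y hy => by
    dsimp only
    rw [Finset.sum_congr rfl fun i hi => hc i hi y hy, Finset.sum_add_distrib, Finset.sum_mul]⟩

theorem AffineOnWith.hasAffinePartition (h : AffineOnWith S f u v) (huv : u < v) :
    HasAffinePartition S f u v :=
  ⟨1, fun i => if i = 0 then u else v, one_pos, rfl, rfl, by simpa using huv, by simpa using h⟩

theorem HasAffinePartition.snoc (h : HasAffinePartition S f u v) (hvw : v < w)
    (hf : AffineOnWith S f v w) : HasAffinePartition S f u w := by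
  obtain ⟨n, t, hn, ht0, htn, ht, haff⟩ := h
  refine ⟨n + 1, fun i => if i ≤ n then t i else w, n.succ_pos, by simp [ht0], by simp,
    fun i hi => ?_, fun i hi => ?_⟩
  · rcases (Nat.lt_succ_iff.1 hi).lt_or_eq with hi | rfl
    · simpa [hi.le, Nat.succ_le_of_lt hi] using ht i hi
    · simpa [htn] using hvw
  · rcases (Nat.lt_succ_iff.1 hi).lt_or_eq with hi | rfl
    · simpa [hi.le, Nat.succ_le_of_lt hi] using haff i hi
    · simpa [htn] using hf

theorem hasAffinePartition_of_forall_notMem_Ioo (huv : u < v) (P : Finset ℝ)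
    (h : ∀ a b, u ≤ a → a < b → b ≤ v → (∀ x ∈ P, x ∉ Ioo a b) → AffineOnWith S f a b) :
    HasAffinePartition S f u v := by
  classical
  induction P using Finset.induction_on_max generalizing v with
  | empty => exact (h u v le_rfl huv le_rfl (by simp)).hasAffinePartition huv
  | insert x P hxP ih =>
    simp only [Finset.forall_mem_insert] at h
    by_cases hx : x ∈ Ioo u v
    · refine (ih hx.1 fun a b ha hab hb hP => h a b ha hab (hb.trans hx.2.le) ⟨?_, hP⟩).snoc
        hx.2 (h x v hx.1.le hx.2 le_rfl ⟨fun hx' => hx'.1.false, ?_⟩)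
      · exact fun hx' => hx'.2.not_ge hb
      · exact fun y hy hy' => (hxP y hy).not_gt hy'.1
    · exact ih huv fun a b ha hab hb hP => h a b ha hab hb
        ⟨fun hx' => hx ⟨ha.trans_lt hx'.1, hx'.2.trans_le hb⟩, hP⟩

end AffinePieces

/-- The multiplicatively `b`-periodic function on `(0, ∞)` that agrees with `g` on `[u, b u)`. -/
noncomputable def mulPeriodicExt (b : ℕ) (u : ℝ) (g : ℝ → ℝ) (y : ℝ) : ℝ :=
  g (y / (b : ℝ) ^ Int.log b (y / u))

section MulPeriodicExt

variable {b : ℕ} {u : ℝ} {g : ℝ → ℝ}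

theorem log_div_eq_of_mem_Ico (hb : 1 < b) (hu : 0 < u) {k : ℤ} {y : ℝ}
    (hy : y ∈ Ico ((b : ℝ) ^ k * u) ((b : ℝ) ^ (k + 1) * u)) : Int.log b (y / u) = k := by
  have hy0 : 0 < y / u := div_pos ((by positivity : (0 : ℝ) < b ^ k * u).trans_le hy.1) hu
  have h1 := (Int.zpow_le_iff_le_log hb hy0).1 (by rw [le_div_iff₀ hu]; exact hy.1)
  have h2 := (Int.lt_zpow_iff_log_lt hb hy0).1 (by rw [div_lt_iff₀ hu]; exact hy.2)
  omega

theorem mem_Ico_zpow_log_div (hb : 1 < b) (hu : 0 < u) {y : ℝ} (hy : 0 < y) :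
    y ∈ Ico ((b : ℝ) ^ Int.log b (y / u) * u) ((b : ℝ) ^ (Int.log b (y / u) + 1) * u) :=
  ⟨(le_div_iff₀ hu).1 (Int.zpow_log_le_self hb (div_pos hy hu)),
    (div_lt_iff₀ hu).1 (Int.lt_zpow_succ_log_self hb _)⟩

theorem mulPeriodicExt_eq_of_mem_Ico (hb : 1 < b) (hu : 0 < u) {k : ℤ} {y : ℝ}
    (hy : y ∈ Ico ((b : ℝ) ^ k * u) ((b : ℝ) ^ (k + 1) * u)) :
    mulPeriodicExt b u g y = g (y / (b : ℝ) ^ k) := by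
  rw [mulPeriodicExt, log_div_eq_of_mem_Ico hb hu hy]

theorem mulPeriodicExt_eq_of_mem_Icc (hb : 1 < b) (hu : 0 < u) (hg : g u = g (b * u)) {k : ℤ}
    {y : ℝ} (hy : y ∈ Icc ((b : ℝ) ^ k * u) ((b : ℝ) ^ (k + 1) * u)) :
    mulPeriodicExt b u g y = g (y / (b : ℝ) ^ k) := by
  have hb0 : (b : ℝ) ≠ 0 := by positivity
  rcases hy.2.lt_or_eq with h | rfl
  · exact mulPeriodicExt_eq_of_mem_Ico hb hu ⟨hy.1, h⟩
  · have hnext : (b : ℝ) ^ (k + 1) * u < (b : ℝ) ^ (k + 1 + 1) * u :=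
      mul_lt_mul_of_pos_right (zpow_lt_zpow_right₀ (by exact_mod_cast hb) (by omega)) hu
    have hprev : (b : ℝ) ^ (k + 1) * u / (b : ℝ) ^ k = b * u := by
      rw [zpow_add_one₀ hb0]
      field_simp
    rw [mulPeriodicExt_eq_of_mem_Ico hb hu ⟨le_rfl, hnext⟩, hprev,
      mul_div_cancel_left₀ u (zpow_ne_zero _ hb0), hg]

theorem mulPeriodicExt_mul (hb : 1 < b) (hu : 0 < u) {y : ℝ} (hy : 0 < y) :
    mulPeriodicExt b u g (b * y) = mulPeriodicExt b u g y := by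
  have hb0 : (0 : ℝ) < b := by positivity
  have hy' := mem_Ico_zpow_log_div hb hu hy
  set k := Int.log b (y / u)
  have hby : (b : ℝ) * y ∈ Ico ((b : ℝ) ^ (k + 1) * u) ((b : ℝ) ^ (k + 1 + 1) * u) := by
    have e : ∀ j : ℤ, (b : ℝ) ^ (j + 1) * u = b * ((b : ℝ) ^ j * u) := fun j => by
      rw [zpow_add_one₀ hb0.ne']
      ring
    exact ⟨e k ▸ mul_le_mul_of_nonneg_left hy'.1 hb0.le,
      e (k + 1) ▸ mul_lt_mul_of_pos_left hy'.2 hb0⟩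
  rw [mulPeriodicExt_eq_of_mem_Ico hb hu hby, mulPeriodicExt_eq_of_mem_Ico hb hu hy',
    zpow_add_one₀ hb0.ne', mul_comm _ (b : ℝ), mul_div_mul_left _ _ hb0.ne']

theorem mulPeriodicExt_eqOn (hb : 1 < b) (hu : 0 < u) (hg : g u = g (b * u)) :
    EqOn (mulPeriodicExt b u g) g (Icc u (b * u)) := fun y hy => by
  simpa using mulPeriodicExt_eq_of_mem_Icc hb hu hg (k := 0) (by simpa using hy)

theorem continuousOn_mulPeriodicExt (hb : 1 < b) (hu : 0 < u) (hg : g u = g (b * u))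
    (hgc : Continuous g) : ContinuousOn (mulPeriodicExt b u g) (Ioi 0) := by
  have hIcc : ∀ k : ℤ,
      ContinuousOn (mulPeriodicExt b u g) (Icc ((b : ℝ) ^ k * u) ((b : ℝ) ^ (k + 1) * u)) :=
    fun k => (hgc.comp (continuous_id.div_const _)).continuousOn.congr fun y hy =>
      mulPeriodicExt_eq_of_mem_Icc hb hu hg hy
  intro y (hy : 0 < y)
  have hy' := mem_Ico_zpow_log_div hb hu hy
  set k := Int.log b (y / u)
  have hprev : (b : ℝ) ^ (k - 1) * u < (b : ℝ) ^ k * u :=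
    mul_lt_mul_of_pos_right (zpow_lt_zpow_right₀ (by exact_mod_cast hb) (by omega)) hu
  have h := (hIcc (k - 1)).union_of_isClosed (hIcc k) isClosed_Icc isClosed_Icc
  rw [sub_add_cancel, Icc_union_Icc_eq_Icc hprev.le (hy'.1.trans hy'.2.le)] at h
  exact (h.continuousAt (Icc_mem_nhds (hprev.trans_le hy'.1) hy'.2)).continuousWithinAt

theorem piecewiseAffineWith_mulPeriodicExt (hb : 1 < b) (hu : 0 < u) (hg : g u = g (b * u))
    {S : Set ℝ} (hS : ∀ s ∈ S, ∀ k : ℤ, s / (b : ℝ) ^ k ∈ S) (Q : Finset ℝ) (huQ : u ∈ Q)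
    (hgQ : ∀ a c, a < c → (∀ q ∈ Q, q ∉ Ioo a c) → AffineOnWith S g a c) :
    PiecewiseAffineWith S (mulPeriodicExt b u g) := by
  classical
  intro v w hv hvw
  set K := Finset.Icc (Int.log b (v / u)) (Int.log b (w / u))
  refine hasAffinePartition_of_forall_notMem_Ioo hvw
    ((K ×ˢ Q).image fun kq => (b : ℝ) ^ kq.1 * kq.2) fun a c hva hac hcw hP => ?_
  have hP' : ∀ k ∈ K, ∀ q ∈ Q, (b : ℝ) ^ k * q ∉ Ioo a c := fun k hk q hq =>
    hP _ (Finset.mem_image.2 ⟨(k, q), Finset.mem_product.2 ⟨hk, hq⟩, rfl⟩)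
  have ha := mem_Ico_zpow_log_div hb hu (hv.trans_le hva)
  set k := Int.log b (a / u)
  have hkK : ∀ j, k ≤ j → (b : ℝ) ^ j * u ≤ w → j ∈ K := fun j hkj hj =>
    Finset.mem_Icc.2 ⟨(Int.log_mono_right (div_pos hv hu) (by gcongr)).trans hkj,
      (Int.zpow_le_iff_le_log hb (div_pos (hv.trans hvw) hu)).1 ((le_div_iff₀ hu).2 hj)⟩
  have hcb : c ≤ (b : ℝ) ^ (k + 1) * u := not_lt.1 fun h =>
    hP' (k + 1) (hkK _ (by omega) (h.le.trans hcw)) u huQ ⟨ha.2, h⟩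
  have hbk : (0 : ℝ) < (b : ℝ) ^ k := zpow_pos (by positivity) k
  obtain ⟨s, hs, e, hse⟩ := hgQ (a / (b : ℝ) ^ k) (c / (b : ℝ) ^ k) (by gcongr)
    fun q hq hq' => hP' k (hkK k le_rfl (ha.1.trans (hac.le.trans hcw))) q hq
      ⟨(div_lt_iff₀' hbk).1 hq'.1, (lt_div_iff₀' hbk).1 hq'.2⟩
  refine ⟨s / (b : ℝ) ^ k, hS s hs k, e, fun y hy => ?_⟩
  rw [mulPeriodicExt_eq_of_mem_Icc hb hu hg ⟨ha.1.trans hy.1, hy.2.trans hcb⟩,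
    hse _ ⟨by gcongr; exact hy.1, by gcongr; exact hy.2⟩]
  ring

theorem hasRightSlope_mulPeriodicExt (hb : 1 < b) (hu : 0 < u) (hg : g u = g (b * u)) {s : ℝ}
    (h : HasRightSlope g u s) : HasRightSlope (mulPeriodicExt b u g) u s :=
  h.congr (eventuallyEq_of_mem (Icc_mem_nhdsGE (lt_mul_left hu (by exact_mod_cast hb)))
    (mulPeriodicExt_eqOn hb hu hg).symm)

theorem hasLeftSlope_mulPeriodicExt (hb : 1 < b) (hu : 0 < u) (hg : g u = g (b * u)) {s : ℝ}
    (h : HasLeftSlope g (b * u) s) : HasLeftSlope (mulPeriodicExt b u g) u (b * s) :=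
  (h.congr (eventuallyEq_of_mem (Icc_mem_nhdsLE (lt_mul_left hu (by exact_mod_cast hb)))
    (mulPeriodicExt_eqOn hb hu hg).symm)).of_mul_periodic (by positivity)
      (fun _ hy => mulPeriodicExt_mul hb hu hy) hu

theorem hasOrdAt_mulPeriodicExt (hb : 1 < b) (hu : 0 < u) (hg : g u = g (b * u)) {z d : ℝ}
    (hz : z ∈ Ioo u (b * u)) (h : HasOrdAt g z d) : HasOrdAt (mulPeriodicExt b u g) z d :=
  h.congr (eventuallyEq_of_mem (Icc_mem_nhds hz.1 hz.2) (mulPeriodicExt_eqOn hb hu hg).symm)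

theorem kCp_mulPeriodicExt {p : ℕ} (hp : p.Prime) {u : ℝ} (hu : 0 < u) {g : ℝ → ℝ}
    (hgc : Continuous g) (hg : g u = g (p * u)) (Q : Finset ℝ) (huQ : u ∈ Q)
    (hgQ : ∀ a c, a < c → (∀ q ∈ Q, q ∉ Ioo a c) → AffineOnWith (HpSet p) g a c) :
    KCp p (mulPeriodicExt p u g) :=
  ⟨continuousOn_mulPeriodicExt hp.one_lt hu hg hgc,
    piecewiseAffineWith_mulPeriodicExt hp.one_lt hu hg (fun _ hs k => div_zpow_mem_hpSet hs k) Q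
      huQ hgQ,
    fun _ hy => mulPeriodicExt_mul hp.one_lt hu hy⟩

end MulPeriodicExt

noncomputable def rrCandidate (n : ℕ) (lam a : ℕ → ℝ) (σ η x z : ℝ) : ℝ :=
  σ * (z - lam 0) + ∑ j ∈ Finset.range n, -a j * max 0 (z - lam j) + η * max 0 (z - x)

section RRCandidate

variable {n : ℕ} {lam a : ℕ → ℝ} {σ η x : ℝ}

theorem continuous_rrCandidate : Continuous (rrCandidate n lam a σ η x) := by
  unfold rrCandidate
  fun_prop

theorem rrCandidate_apply_lam_zero (hlam : ∀ j < n, lam 0 ≤ lam j) (hx : lam 0 ≤ x) :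
    rrCandidate n lam a σ η x (lam 0) = 0 := by
  rw [rrCandidate, Finset.sum_eq_zero fun j hj => by
    rw [max_eq_left (sub_nonpos.2 (hlam j (Finset.mem_range.1 hj))), mul_zero],
    max_eq_left (sub_nonpos.2 hx)]
  ring

theorem rrCandidate_of_ge {z : ℝ} (hz : ∀ j < n, lam j ≤ z) (hx : x ≤ z) :
    rrCandidate n lam a σ η x z =
      σ * (z - lam 0) + ∑ j ∈ Finset.range n, -a j * (z - lam j) + η * (z - x) := by
  rw [rrCandidate, Finset.sum_congr rfl fun j hj => by
    rw [max_eq_right (sub_nonneg.2 (hz j (Finset.mem_range.1 hj)))],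
    max_eq_right (sub_nonneg.2 hx)]

theorem hasRightSlope_rrCandidate (z : ℝ) :
    HasRightSlope (rrCandidate n lam a σ η x) z
      (σ + ∑ j ∈ Finset.range n, (if lam j ≤ z then -a j else 0) + if x ≤ z then η else 0) :=
  ((hasRightSlope_linear σ (lam 0) z).add (hasRightSlope_sum _ fun j _ =>
    hasRightSlope_hinge (-a j) (lam j) z)).add (hasRightSlope_hinge η x z)

theorem hasLeftSlope_rrCandidate (z : ℝ) :
    HasLeftSlope (rrCandidate n lam a σ η x) z
      (σ + ∑ j ∈ Finset.range n, (if lam j < z then -a j else 0) + if x < z then η else 0) :=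
  ((hasLeftSlope_linear σ (lam 0) z).add (hasLeftSlope_sum _ fun j _ =>
    hasLeftSlope_hinge (-a j) (lam j) z)).add (hasLeftSlope_hinge η x z)

theorem hasRightSlope_rrCandidate_lam_zero (hn : 0 < n)
    (hlam : ∀ j < n, 0 < j → lam 0 < lam j) (hx : lam 0 < x) :
    HasRightSlope (rrCandidate n lam a σ η x) (lam 0) (σ - a 0) := by
  convert hasRightSlope_rrCandidate (lam 0) using 1
  rw [Finset.sum_eq_single_of_mem 0 (Finset.mem_range.2 hn) fun j hj hj0 =>
      if_neg (not_le.2 (hlam j (Finset.mem_range.1 hj) (Nat.pos_of_ne_zero hj0))),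
    if_pos le_rfl, if_neg (not_le.2 hx)]
  ring

theorem hasLeftSlope_rrCandidate_of_lt {z : ℝ} (hlam : ∀ j < n, lam j < z) (hx : x < z) :
    HasLeftSlope (rrCandidate n lam a σ η x) z (σ - ∑ j ∈ Finset.range n, a j + η) := by
  convert hasLeftSlope_rrCandidate z using 1
  rw [Finset.sum_congr rfl fun j hj => if_pos (hlam j (Finset.mem_range.1 hj)), if_pos hx,
    Finset.sum_neg_distrib]
  ring

theorem hasOrdAt_rrCandidate (z : ℝ) :
    HasOrdAt (rrCandidate n lam a σ η x) z
      (z * (∑ j ∈ Finset.range n, (if z = lam j then -a j else 0) + if z = x then η else 0)) := by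
  refine ⟨_, _, hasRightSlope_rrCandidate z, hasLeftSlope_rrCandidate z, ?_⟩
  have hjump : ∀ w c : ℝ,
      (if z = w then c else 0) = (if w ≤ z then c else 0) - if w < z then c else 0 := by
    intro w c
    rcases lt_trichotomy w z with h | rfl | h
    · simp [h.le, h, h.ne']
    · simp
    · simp [not_le.2 h, not_lt.2 h.le, h.ne]
  rw [hjump x η, Finset.sum_congr rfl fun j _ => hjump (lam j) (-a j), Finset.sum_sub_distrib]
  ring

theorem affineOnWith_rrCandidate {G : Type*} [SetLike G ℝ] [AddSubgroupClass G ℝ] {H : G}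
    (hσ : σ ∈ H) (hη : η ∈ H) (ha : ∀ j < n, a j ∈ H) {u v : ℝ}
    (hQ : ∀ q ∈ insert x ((Finset.range n).image lam), q ∉ Ioo u v) :
    AffineOnWith H (rrCandidate n lam a σ η x) u v := by
  simp only [Finset.forall_mem_insert, Finset.forall_mem_image, Finset.mem_range] at hQ
  exact ((affineOnWith_linear hσ _).add (affineOnWith_sum _ fun j hj =>
    affineOnWith_hinge (neg_mem (ha j (Finset.mem_range.1 hj)))
      (hQ.2 (Finset.mem_range.1 hj)))).add (affineOnWith_hinge hη hQ.1)

end RRCandidate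

theorem exists_rrCandidate_params {p n : ℕ} (hp : 1 < p) {lam a : ℕ → ℝ} (hlam0 : 0 < lam 0)
    (hmono : ∀ j, j + 1 < n → lam j < lam (j + 1)) (hlt : lam (n - 1) < p * lam 0)
    (hdeg : 0 < ∑ j ∈ Finset.range n, a j * lam j) :
    ∃ σ ∈ HpSet p, ∃ η ∈ HpSet p, ∃ x, 0 < η ∧ lam (n - 1) < x ∧ x < p * lam 0 ∧
      η * x < ∑ j ∈ Finset.range n, a j * lam j ∧ rrCandidate n lam a σ η x (p * lam 0) = 0 := by
  have hp1 : (1 : ℝ) < p := by exact_mod_cast hp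
  set deg := ∑ j ∈ Finset.range n, a j * lam j
  set T := ∑ j ∈ Finset.range n, a j * (p * lam 0 - lam j)
  set L := p * lam 0 - lam 0
  set Δ := p * lam 0 - lam (n - 1)
  have hL : 0 < L := by nlinarith
  have hΔ : 0 < Δ := sub_pos.2 hlt
  obtain ⟨η, hηH, hη0, hη⟩ :=
    exists_mem_hpSet_Ioo hp (div_pos hdeg (by positivity : (0 : ℝ) < p * lam 0))
  rw [lt_div_iff₀ (by positivity)] at hη
  obtain ⟨σ, hσH, hσ1, hσ2⟩ := exists_mem_hpSet_Ioo hp (u := (T - η * Δ) / L) (v := T / L)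
    (by gcongr; linarith [mul_pos hη0 hΔ])
  rw [div_lt_iff₀ hL] at hσ1
  rw [lt_div_iff₀ hL] at hσ2
  -- `σ L + η (p lam 0 - x) = T` is the condition `rrCandidate (p * lam 0) = 0`
  set x := p * lam 0 - (T - σ * L) / η
  have hx1 : lam (n - 1) < x := by
    have : (T - σ * L) / η < Δ := by rw [div_lt_iff₀ hη0]; linarith
    linarith
  have hx2 : x < p * lam 0 := by
    have : 0 < (T - σ * L) / η := div_pos (by linarith) hη0
    linarith
  have hηx : η * (p * lam 0 - x) = T - σ * L := by
    simp only [x, sub_sub_cancel]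
    field_simp
  have hlam := (strictMonoOn_Iio_of_lt_succ hmono).monotoneOn
  refine ⟨σ, hσH, η, hηH, x, hη0, hx1, hx2, by linarith, ?_⟩
  rw [rrCandidate_of_ge (fun j hj => (hlam hj (by simp; omega) (by omega)).trans hlt.le) hx2.le,
    hηx, Finset.sum_congr rfl fun j _ => neg_mul (a j) _, Finset.sum_neg_distrib]
  ring

theorem solvesRR_mulPeriodicExt_rrCandidate {p n : ℕ} (hp : 1 < p) (hn : 0 < n)
    {lam a : ℕ → ℝ} (hlam0 : 0 < lam 0) (hmono : ∀ j, j + 1 < n → lam j < lam (j + 1))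
    {σ η x : ℝ} (hη : 0 ≤ η) (hlamx : ∀ j < n, lam j < x) (hx : x < p * lam 0)
    (hg : rrCandidate n lam a σ η x (p * lam 0) = 0)
    (hdeg : η * x ≤ ∑ j ∈ Finset.range n, a j * lam j) :
    SolvesRR p n lam a (mulPeriodicExt p (lam 0) (rrCandidate n lam a σ η x)) := by
  have hlam := strictMonoOn_Iio_of_lt_succ hmono
  have hlam_gt : ∀ j < n, 0 < j → lam 0 < lam j := fun j hj hj0 => hlam (by simp; omega) hj hj0
  have hlam_lt : ∀ j < n, lam j < p * lam 0 := fun j hj => (hlamx j hj).trans hx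
  have hx0 : lam 0 < x := hlamx 0 hn
  have hper : rrCandidate n lam a σ η x (lam 0) = rrCandidate n lam a σ η x (p * lam 0) := by
    rw [rrCandidate_apply_lam_zero (fun j hj => (hlam.monotoneOn (by simp; omega) hj
      (Nat.zero_le j))) hx0.le, hg]
  have hord := fun z (hz : z ∈ Ioo (lam 0) (p * lam 0)) =>
    hasOrdAt_mulPeriodicExt hp hlam0 hper hz (hasOrdAt_rrCandidate z)
  refine ⟨fun j hj d hd => ?_, fun z hz hzlam d hd => ?_⟩
  · rcases Nat.eq_zero_or_pos j with rfl | hj0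
    · rw [hd.unique ⟨_, _, hasRightSlope_mulPeriodicExt hp hlam0 hper
        (hasRightSlope_rrCandidate_lam_zero hn hlam_gt hx0), hasLeftSlope_mulPeriodicExt hp hlam0
          hper (hasLeftSlope_rrCandidate_of_lt hlam_lt hx), rfl⟩]
      rw [rrCandidate_of_ge (fun j hj => (hlam_lt j hj).le) hx.le] at hg
      have hT : ∑ j ∈ Finset.range n, -a j * (p * lam 0 - lam j) =
          ∑ j ∈ Finset.range n, a j * lam j - p * lam 0 * ∑ j ∈ Finset.range n, a j := by
        rw [Finset.mul_sum, ← Finset.sum_sub_distrib]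
        exact Finset.sum_congr rfl fun j _ => by ring
      linarith
    · rw [hd.unique (hord _ ⟨hlam_gt j hj hj0, hlam_lt j hj⟩),
        Finset.sum_eq_single_of_mem j (Finset.mem_range.2 hj) fun i hi hij =>
          if_neg fun h => hij (hlam.injOn (Finset.mem_range.1 hi) hj h.symm),
        if_pos rfl, if_neg (hlamx j hj).ne]
      linarith
  · have hz' : z ∈ Ioo (lam 0) (p * lam 0) := ⟨hz.1.lt_of_ne fun h => hzlam 0 hn h.symm, hz.2⟩
    rw [hd.unique (hord z hz'), Finset.sum_eq_zero fun j hj =>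
      if_neg (hzlam j (Finset.mem_range.1 hj)), zero_add]
    exact mul_nonneg (hlam0.trans hz'.1).le (by split_ifs <;> [exact hη; exact le_rfl])

theorem statement11_general (p : ℕ) (hp : p.Prime)
    (n : ℕ) (lam a : ℕ → ℝ)
    (hlam0 : 0 < lam 0)
    (hmono : ∀ j, j + 1 < n → lam j < lam (j + 1))
    (hlt : lam (n - 1) < p * lam 0)
    (ha : ∀ j, j < n → a j ∈ HpSet p) :
    ((∑ j ∈ Finset.range n, a j * lam j) < 0 →
      ¬ ∃ f : ℝ → ℝ, KCp p f ∧ SolvesRR p n lam a f) ∧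
    (0 < (∑ j ∈ Finset.range n, a j * lam j) →
      ∃ f : ℝ → ℝ, KCp p f ∧ SolvesRR p n lam a f) := by
  refine ⟨fun hdeg ⟨f, hf, hRR⟩ => not_solvesRR_of_deg_neg hp.one_lt hlam0 hmono hlt hdeg hf hRR,
    fun hdeg => ?_⟩
  have hn : 0 < n := Nat.pos_of_ne_zero fun h => by simp [h] at hdeg
  obtain ⟨σ, hσ, η, hη, x, hη0, hx1, hx2, hηx, hg⟩ :=
    exists_rrCandidate_params hp.one_lt hlam0 hmono hlt hdeg
  have hlam := (strictMonoOn_Iio_of_lt_succ hmono).monotoneOn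
  have hlamx : ∀ j < n, lam j < x := fun j hj => (hlam hj (by simp; omega) (by omega)).trans_lt hx1
  have hper : rrCandidate n lam a σ η x (lam 0) = rrCandidate n lam a σ η x (p * lam 0) := by
    rw [rrCandidate_apply_lam_zero (fun j hj => hlam (by simp; omega) hj (Nat.zero_le j))
      (hlamx 0 hn).le, hg]
  have hlamQ : lam 0 ∈ insert x ((Finset.range n).image lam) :=
    Finset.mem_insert_of_mem (Finset.mem_image_of_mem lam (Finset.mem_range.2 hn))
  exact ⟨_, kCp_mulPeriodicExt hp hlam0 continuous_rrCandidate hper _ hlamQ fun _ _ _ hQ =>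
      affineOnWith_rrCandidate (H := hpAddSubgroup p hp.ne_zero) hσ hη ha hQ,
    solvesRR_mulPeriodicExt_rrCandidate hp.one_lt hn hlam0 hmono hη0.le hlamx hx2 hg hηx.le⟩

/-- Riemann–Roch problem, type II dichotomy. If `deg D = Σ a_j λ_j < 0` then
no `f ∈ K(C_p)` solves the Riemann–Roch problem for `D`; if `deg D > 0` then some `f ∈ K(C_p)`
does. -/
theorem statement11 (p : ℕ) (hp : p.Prime)
    (n : ℕ) (hn : 1 ≤ n) (lam a : ℕ → ℝ)
    (hlam0 : 0 < lam 0)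
    (hmono : ∀ j, j + 1 < n → lam j < lam (j + 1))
    (hlt : lam (n - 1) < p * lam 0)
    (ha : ∀ j, j < n → a j ∈ HpSet p) :
    ((∑ j ∈ Finset.range n, a j * lam j) < 0 →
      ¬ ∃ f : ℝ → ℝ, KCp p f ∧ SolvesRR p n lam a f) ∧
    (0 < (∑ j ∈ Finset.range n, a j * lam j) →
      ∃ f : ℝ → ℝ, KCp p f ∧ SolvesRR p n lam a f) :=
  statement11_general p hp n lam a hlam0 hmono hlt ha
end

section
/- Fix a prime p and an integer N > p. Then: (a) for every integer a with 1 ≤ a ≤ N−p, the function φ_a belongs to E_{N,p}; (b) for every ε with 0 < ε ≤ (p−1)/(N−p+1), the map h sending (t_0, t_1, …, t_{N−p}) with t_0 ∈ ℝ and 0 < t_1 < … < t_{N−p} < ε to the function h(t_0,…,t_{N−p})(x) := max_{0 ≤ j ≤ N−p} (φ_{N−p−j}(x) − Σ_{i=0}^{j} t_i) takes values in E_{N,p} and is injective and continuous with respect to the supremum distance d(f,g) = max_{x∈[1,p]} |f(x) − g(x)| on E_{N,p}. -/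
/-- The `ℝ_max`-module `E_{N,p}`: continuous convex piecewise affine functions `f : [1,p] → ℝ`
with integral slopes such that `f(1) = f(p)` and `−f'₊(1) + p·f'₋(p) ≤ N`. -/
def ENp (p N : ℕ) (f : ℝ → ℝ) : Prop :=
  ContinuousOn f (Set.Icc 1 p) ∧ ConvexOn ℝ (Set.Icc 1 (p : ℝ)) f ∧
  (∃ (n : ℕ) (t : ℕ → ℝ), 0 < n ∧ t 0 = 1 ∧ t n = p ∧ (∀ i < n, t i < t (i + 1)) ∧
    ∀ i < n, ∃ (m : ℤ) (c : ℝ), ∀ x ∈ Set.Icc (t i) (t (i + 1)), f x = (m : ℝ) * x + c) ∧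
  f 1 = f p ∧
  (∃ s1 sp : ℝ, HasRightSlope f 1 s1 ∧ HasLeftSlope f p sp ∧ -s1 + p * sp ≤ N)

/-- The extremal generators `φ_a(x) = max(−a(x−1), b(x−p))` with `b = ⌊(N−a)/p⌋`,
and `φ_0 = 0`. -/
noncomputable def phiF (p N a : ℕ) (x : ℝ) : ℝ :=
  if a = 0 then 0
  else max (-(a : ℝ) * (x - 1)) ((⌊((N : ℝ) - a) / p⌋ : ℝ) * (x - p))

/-- The constraint `0 < t_1 < … < t_{N−p} < ε` on the parameters `(t_i)` (with `t_0 ∈ ℝ` free). -/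
def SimplexConstraints (Np : ℕ) (t : ℕ → ℝ) (ε : ℝ) : Prop :=
  (∀ i, 1 ≤ i → i ≤ Np → 0 < t i) ∧
  (∀ i, 1 ≤ i → i + 1 ≤ Np → t i < t (i + 1)) ∧
  (∀ i, 1 ≤ i → i ≤ Np → t i < ε)

/-- The map `h(t_0,…,t_{N−p})(x) = max_{0 ≤ j ≤ N−p} (φ_{N−p−j}(x) − Σ_{i=0}^{j} t_i)`. -/
noncomputable def hMap (p N : ℕ) (t : ℕ → ℝ) (x : ℝ) : ℝ :=
  (Finset.range (N - p + 1)).sup' (by simp)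
    (fun j => phiF p N (N - p - j) x - ∑ i ∈ Finset.range (j + 1), t i)

/-!
All functions involved are finite maxima of affine functions with integral slopes. Such a
maximum is continuous and convex, and it is affine between consecutive crossing points of its
pieces, so membership in `E_{N,p}` comes down to the values and one-sided slopes at `1` and `p`;
these are those of the piece that strictly dominates at the endpoint.

On `[1, 1 + ε]` only the branches `-a (x - 1)` of the `φ_a` are active, and
`h(t)(1 + u) = -(N - p) u - t₀ + max_j ∑_{i<j} (u - t_{i+1})`. Since `t` is increasing, the
maximum switches from `j` to `j + 1` exactly at `u = t_{j+1}`, which recovers `t` from `h(t)`.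
Continuity holds because a finite maximum moves by at most the largest change of its terms.
-/

open Set Filter Topology

def IsPiecewiseIntAffineOn (f : ℝ → ℝ) (a b : ℝ) : Prop :=
  ∃ (n : ℕ) (t : ℕ → ℝ), 0 < n ∧ t 0 = a ∧ t n = b ∧ (∀ i < n, t i < t (i + 1)) ∧
    ∀ i < n, ∃ (m : ℤ) (c : ℝ), ∀ x ∈ Icc (t i) (t (i + 1)), f x = (m : ℝ) * x + c

namespace IsPiecewiseIntAffineOn

variable {f : ℝ → ℝ} {a b c : ℝ}

theorem of_eqOn_affine (hab : a < b) {m : ℤ} {d : ℝ} (h : ∀ x ∈ Icc a b, f x = m * x + d) :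
    IsPiecewiseIntAffineOn f a b :=
  ⟨1, fun i => if i = 0 then a else b, one_pos, rfl, rfl,
    fun i hi => by simpa [Nat.lt_one_iff.1 hi] using hab,
    fun i hi => ⟨m, d, by simpa [Nat.lt_one_iff.1 hi] using h⟩⟩

theorem trans (hab : IsPiecewiseIntAffineOn f a b) (hbc : IsPiecewiseIntAffineOn f b c) :
    IsPiecewiseIntAffineOn f a c := by
  obtain ⟨n, t, hn, ht₀, htn, ht, hpiece⟩ := hab
  obtain ⟨m, u, hm, hu₀, hum, hu, hpiece'⟩ := hbc
  set v : ℕ → ℝ := fun i => if i ≤ n then t i else u (i - n) with hv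
  have hvt : ∀ i ≤ n, v i = t i := fun i hi => if_pos hi
  have hvu : ∀ i, n ≤ i → v i = u (i - n) := by
    intro i hi
    rcases hi.eq_or_lt with rfl | hlt
    · simp [hv, htn, hu₀]
    · exact if_neg (by omega)
  have hshift : ∀ i, n ≤ i → i + 1 - n = i - n + 1 := by omega
  refine ⟨n + m, v, by omega, by rw [hvt 0 (by omega), ht₀],
    by rw [hvu _ (by omega), Nat.add_sub_cancel_left, hum], fun i hi => ?_, fun i hi => ?_⟩
  · rcases lt_or_ge i n with h | h
    · rw [hvt i h.le, hvt (i + 1) h]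
      exact ht i h
    · rw [hvu i h, hvu (i + 1) (by omega), hshift i h]
      exact hu _ (by omega)
  · rcases lt_or_ge i n with h | h
    · rw [hvt i h.le, hvt (i + 1) h]
      exact hpiece i h
    · rw [hvu i h, hvu (i + 1) (by omega), hshift i h]
      exact hpiece' _ (by omega)

theorem of_finset_cuts (S : Finset ℝ)
    (hS : ∀ a b, a < b → (∀ z ∈ S, z ∉ Ioo a b) →
      ∃ (m : ℤ) (d : ℝ), ∀ x ∈ Icc a b, f x = m * x + d)
    (hab : a < b) : IsPiecewiseIntAffineOn f a b := by
  induction hn : (S.filter (· ∈ Ioo a b)).card using Nat.strong_induction_on generalizing a b with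
  | _ n ih =>
    by_cases hcut : ∃ z ∈ S, z ∈ Ioo a b
    · obtain ⟨z, hzS, hz⟩ := hcut
      have hfewer : ∀ a' b', Ioo a' b' ⊆ Ioo a b → z ∉ Ioo a' b' →
          (S.filter (· ∈ Ioo a' b')).card < n := by
        intro a' b' hsub hz'
        rw [← hn]
        refine Finset.card_lt_card ((Finset.ssubset_iff_of_subset
          (Finset.monotone_filter_right S fun x _ hx => hsub hx)).2
          ⟨z, Finset.mem_filter.2 ⟨hzS, hz⟩, fun h => hz' (Finset.mem_filter.1 h).2⟩)
      exact (ih _ (hfewer a z (Ioo_subset_Ioo_right hz.2.le) (by simp)) hz.1 rfl).trans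
        (ih _ (hfewer z b (Ioo_subset_Ioo_left hz.1.le) (by simp)) hz.2 rfl)
    · push Not at hcut
      obtain ⟨m, d, h⟩ := hS a b hab hcut
      exact of_eqOn_affine hab h

end IsPiecewiseIntAffineOn

theorem affine_nonpos_of_no_root {α β a b x₀ x : ℝ} (hx₀ : x₀ ∈ Ioo a b) (hx : x ∈ Icc a b)
    (h₀ : α * x₀ + β ≤ 0) (hroot : ∀ z ∈ Ioo a b, α * z + β = 0 → α = 0) :
    α * x + β ≤ 0 := by
  by_contra! h
  have hd : 0 < (α * x + β) - (α * x₀ + β) := by linarith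
  -- the root of the affine function between `x₀` and `x`
  set z := ((α * x + β) * x₀ - (α * x₀ + β) * x) / ((α * x + β) - (α * x₀ + β))
  have hz : α * z + β = 0 := by
    simp only [z]
    field_simp
    ring
  have hza : a < z := by
    rw [lt_div_iff₀ hd]
    nlinarith [hx₀.1, hx.1]
  have hzb : z < b := by
    rw [div_lt_iff₀ hd]
    nlinarith [hx₀.2, hx.2]
  have hα := hroot z ⟨hza, hzb⟩ hz
  subst hα
  linarith

def IsMaxOfIntAffine (f : ℝ → ℝ) : Prop :=
  ∃ (s : Finset (ℤ × ℝ)) (hs : s.Nonempty), ∀ x, f x = s.sup' hs fun q => (q.1 : ℝ) * x + q.2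

namespace IsMaxOfIntAffine

theorem affine (m : ℤ) (c : ℝ) : IsMaxOfIntAffine fun x => m * x + c :=
  ⟨{(m, c)}, Finset.singleton_nonempty _, fun _ => rfl⟩

variable {f g : ℝ → ℝ}

theorem max (hf : IsMaxOfIntAffine f) (hg : IsMaxOfIntAffine g) :
    IsMaxOfIntAffine fun x => max (f x) (g x) := by
  classical
  obtain ⟨s, hs, hf⟩ := hf
  obtain ⟨s', hs', hg⟩ := hg
  exact ⟨s ∪ s', hs.mono Finset.subset_union_left, fun x => by
    rw [Finset.sup'_union hs hs', ← hf, ← hg]⟩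

theorem sub_const (hf : IsMaxOfIntAffine f) (d : ℝ) : IsMaxOfIntAffine fun x => f x - d := by
  classical
  obtain ⟨s, hs, hf⟩ := hf
  refine ⟨s.image fun q => (q.1, q.2 - d), hs.image _, fun x => ?_⟩
  rw [Finset.sup'_image]
  change f x - d = _
  rw [hf, Finset.apply_sup'_eq_sup'_comp hs (· - d) fun _ _ => (max_sub_sub_right _ _ _).symm]
  simp only [Function.comp_def, add_sub_assoc]

theorem finset_sup' {ι : Type*} {s : Finset ι} (hs : s.Nonempty) {F : ι → ℝ → ℝ}
    (hF : ∀ j ∈ s, IsMaxOfIntAffine (F j)) :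
    IsMaxOfIntAffine fun x => s.sup' hs fun j => F j x := by
  induction hs using Finset.Nonempty.cons_induction with
  | singleton j => simpa using hF j (Finset.mem_singleton_self j)
  | cons j s hj hs ih =>
    simp only [Finset.sup'_cons hs]
    exact (hF j (Finset.mem_cons_self j s)).max (ih fun i hi => hF i (Finset.mem_cons_of_mem hi))

theorem continuous (hf : IsMaxOfIntAffine f) : Continuous f := by
  obtain ⟨s, hs, hf⟩ := hf
  rw [funext hf]
  exact Continuous.finset_sup'_apply hs fun q _ => by fun_prop

theorem convexOn (hf : IsMaxOfIntAffine f) {D : Set ℝ} (hD : Convex ℝ D) : ConvexOn ℝ D f := by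
  obtain ⟨s, hs, hf⟩ := hf
  have : f = s.sup' hs fun q x => (q.1 : ℝ) * x + q.2 := by
    funext x; rw [hf, Finset.sup'_apply]
  rw [this]
  exact Finset.sup'_induction hs _ (fun _ h₁ _ h₂ => h₁.sup h₂)
    fun q _ => (LinearMap.mul ℝ ℝ (q.1 : ℝ)).convexOn hD |>.add_const q.2

/-- The cut points are the abscissae where two of the affine functions cross: between two
consecutive ones a single affine function is maximal. -/
theorem isPiecewiseIntAffineOn (hf : IsMaxOfIntAffine f) {a b : ℝ} (hab : a < b) :
    IsPiecewiseIntAffineOn f a b := by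
  obtain ⟨s, hs, hf⟩ := hf
  refine .of_finset_cuts ((s ×ˢ s).image fun qr => (qr.2.2 - qr.1.2) / ((qr.1.1 : ℝ) - qr.2.1))
    (fun a b hab hcut => ?_) hab
  have hmid : (a + b) / 2 ∈ Ioo a b := ⟨by linarith, by linarith⟩
  obtain ⟨q₀, hq₀, hmax⟩ :=
    Finset.exists_mem_eq_sup' hs fun q : ℤ × ℝ => (q.1 : ℝ) * ((a + b) / 2) + q.2
  refine ⟨q₀.1, q₀.2, fun x hx => ?_⟩
  rw [hf]
  refine le_antisymm (Finset.sup'_le _ _ fun q hq => ?_)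
    (Finset.le_sup' (fun q : ℤ × ℝ => (q.1 : ℝ) * x + q.2) hq₀)
  have hle : ((q.1 : ℝ) - q₀.1) * x + (q.2 - q₀.2) ≤ 0 := by
    refine affine_nonpos_of_no_root hmid hx ?_ fun z hz hroot => ?_
    · have := Finset.le_sup' (fun q : ℤ × ℝ => (q.1 : ℝ) * ((a + b) / 2) + q.2) hq
      rw [hmax] at this
      linarith
    · by_contra hne
      refine hcut z (Finset.mem_image.2 ⟨(q, q₀), Finset.mem_product.2 ⟨hq, hq₀⟩, ?_⟩) hz
      rw [div_eq_iff hne]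
      linarith
  linarith

end IsMaxOfIntAffine

theorem hasRightSlope_of_eventuallyEq {f : ℝ → ℝ} {x c s : ℝ}
    (h : ∀ᶠ y in 𝓝 x, f y = c + s * (y - x)) : HasRightSlope f x s := by
  have hx : f x = c := by simpa using h.self_of_nhds
  obtain ⟨δ, hδ, hball⟩ := Metric.eventually_nhds_iff.1 h
  refine ⟨δ, hδ, fun y hy => hx ▸ hball ?_⟩
  rw [Real.dist_eq, abs_lt]
  constructor <;> linarith [hy.1, hy.2]

theorem hasLeftSlope_of_eventuallyEq {f : ℝ → ℝ} {x c s : ℝ}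
    (h : ∀ᶠ y in 𝓝 x, f y = c + s * (y - x)) : HasLeftSlope f x s := by
  have hx : f x = c := by simpa using h.self_of_nhds
  obtain ⟨δ, hδ, hball⟩ := Metric.eventually_nhds_iff.1 h
  refine ⟨δ, hδ, fun y hy => hx ▸ hball ?_⟩
  rw [Real.dist_eq, abs_lt]
  constructor <;> linarith [hy.1, hy.2]

theorem Finset.eventually_sup'_eq_of_lt {X α ι : Type*} [TopologicalSpace X] [LinearOrder α]
    [TopologicalSpace α] [OrderClosedTopology α] {s : Finset ι} (hs : s.Nonempty)
    {F : ι → X → α} {x₀ : X} {j₀ : ι} (hj₀ : j₀ ∈ s) (hF : ∀ j ∈ s, ContinuousAt (F j) x₀)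
    (hlt : ∀ j ∈ s, j ≠ j₀ → F j x₀ < F j₀ x₀) :
    ∀ᶠ y in 𝓝 x₀, s.sup' hs (fun j => F j y) = F j₀ y := by
  have : ∀ᶠ y in 𝓝 x₀, ∀ j ∈ s, j ≠ j₀ → F j y < F j₀ y :=
    (Filter.eventually_all_finset s).2 fun j hj =>
      Filter.eventually_imp_distrib_left.2 fun hne =>
        (hF j hj).eventually_lt (hF j₀ hj₀) (hlt j hj hne)
  filter_upwards [this] with y hy
  refine le_antisymm (Finset.sup'_le _ _ fun j hj => ?_) (Finset.le_sup' (F · y) hj₀)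
  rcases eq_or_ne j j₀ with rfl | hne
  · rfl
  · exact (hy j hj hne).le

theorem IsMaxOfIntAffine.mem_ENp {p N : ℕ} {f : ℝ → ℝ} (hf : IsMaxOfIntAffine f) (hp : 1 < p)
    (h1p : f 1 = f p) {s₁ sₚ : ℝ} (h₁ : HasRightSlope f 1 s₁) (hₚ : HasLeftSlope f p sₚ)
    (hs : -s₁ + p * sₚ ≤ N) : ENp p N f :=
  ⟨hf.continuous.continuousOn, hf.convexOn (convex_Icc _ _),
    hf.isPiecewiseIntAffineOn (by exact_mod_cast hp), h1p, s₁, sₚ, h₁, hₚ, hs⟩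

theorem Finset.sum_range_le_sum_range_of_nonneg_of_nonpos {M : Type*} [AddCommMonoid M]
    [PartialOrder M] [IsOrderedAddMonoid M] {g : ℕ → M} {n j j' : ℕ} (hj' : j' ≤ n)
    (hpos : ∀ i < j, 0 ≤ g i) (hneg : ∀ i, j ≤ i → i < n → g i ≤ 0) :
    ∑ i ∈ Finset.range j', g i ≤ ∑ i ∈ Finset.range j, g i := by
  rcases le_total j' j with h | h
  · rw [← Finset.sum_range_add_sum_Ico _ h]
    exact le_add_of_nonneg_right (Finset.sum_nonneg fun i hi => hpos i (Finset.mem_Ico.1 hi).2)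
  · rw [← Finset.sum_range_add_sum_Ico _ h]
    exact add_le_of_nonpos_right (Finset.sum_nonpos fun i hi =>
      hneg i (Finset.mem_Ico.1 hi).1 (by have := (Finset.mem_Ico.1 hi).2; omega))

theorem Finset.abs_sup'_sub_sup'_lt {ι α : Type*} [AddCommGroup α] [LinearOrder α]
    [IsOrderedAddMonoid α] {s : Finset ι} (hs : s.Nonempty) {F G : ι → α} {C : α}
    (h : ∀ i ∈ s, |F i - G i| < C) : |s.sup' hs F - s.sup' hs G| < C := by
  rw [abs_sub_lt_iff, sub_lt_iff_lt_add, sub_lt_iff_lt_add, Finset.sup'_lt_iff,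
    Finset.sup'_lt_iff]
  constructor <;> intro i hi <;> have := abs_sub_lt_iff.1 (h i hi)
  · exact (sub_lt_iff_lt_add.1 this.1).trans_le (add_le_add_right (Finset.le_sup' G hi) C)
  · exact (sub_lt_iff_lt_add.1 this.2).trans_le (add_le_add_right (Finset.le_sup' F hi) C)

section phiF

variable {p N a : ℕ}

theorem one_le_floor_div (hp : 0 < p) (haN : a + p ≤ N) : (1 : ℝ) ≤ ⌊((N : ℝ) - a) / p⌋ := by
  have haN' : (a : ℝ) + p ≤ N := by exact_mod_cast haN
  have : ((1 : ℤ) : ℝ) ≤ ((N : ℝ) - a) / p := by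
    rw [Int.cast_one, le_div_iff₀ (by exact_mod_cast hp)]
    linarith
  exact_mod_cast Int.le_floor.2 this

theorem mul_floor_div_le {x y : ℝ} (hy : 0 < y) : y * ⌊x / y⌋ ≤ x :=
  calc y * ⌊x / y⌋ ≤ y * (x / y) := mul_le_mul_of_nonneg_left (Int.floor_le _) hy.le
    _ = x := mul_div_cancel₀ x hy.ne'

theorem phiF_isMaxOfIntAffine (p N a : ℕ) : IsMaxOfIntAffine (phiF p N a) := by
  by_cases ha : a = 0
  · have : phiF p N a = fun x => ((0 : ℤ) : ℝ) * x + 0 := funext fun x => by simp [phiF, ha]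
    exact this ▸ IsMaxOfIntAffine.affine 0 0
  · have : phiF p N a = fun x => max (((-a : ℤ) : ℝ) * x + a)
        ((⌊((N : ℝ) - a) / p⌋ : ℤ) * x + -(⌊((N : ℝ) - a) / p⌋ * p)) := funext fun x => by
      simp only [phiF, if_neg ha]
      congr 1 <;> push_cast <;> ring
    exact this ▸ (IsMaxOfIntAffine.affine _ _).max (IsMaxOfIntAffine.affine _ _)

theorem phiF_one (hp : 1 ≤ p) (haN : a ≤ N) : phiF p N a 1 = 0 := by
  have hb : (0 : ℝ) ≤ ⌊((N : ℝ) - a) / p⌋ := by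
    exact_mod_cast Int.floor_nonneg.2 (div_nonneg (by simp [haN]) (Nat.cast_nonneg p))
  have hp' : (1 : ℝ) ≤ p := by exact_mod_cast hp
  unfold phiF
  split_ifs
  · rfl
  · rw [max_eq_left] <;> nlinarith

theorem phiF_self (hp : 1 ≤ p) : phiF p N a p = 0 := by
  have hp' : (1 : ℝ) ≤ p := by exact_mod_cast hp
  unfold phiF
  split_ifs
  · rfl
  · rw [max_eq_right] <;> nlinarith [(Nat.cast_nonneg a : (0 : ℝ) ≤ a)]

theorem phiF_eventuallyEq_one (hp : 1 < p) (ha : a ≠ 0) (haN : a + p ≤ N) :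
    ∀ᶠ y in 𝓝 1, phiF p N a y = -(a : ℝ) * (y - 1) := by
  have hb := one_le_floor_div (by omega) haN
  have hp' : (1 : ℝ) < p := by exact_mod_cast hp
  have hlt : ∀ᶠ y in 𝓝 (1 : ℝ),
      (⌊((N : ℝ) - a) / p⌋ : ℝ) * (y - p) < -(a : ℝ) * (y - 1) :=
    ContinuousAt.eventually_lt (by fun_prop) (by fun_prop) (by nlinarith)
  filter_upwards [hlt] with y hy
  simp only [phiF, if_neg ha, max_eq_left hy.le]

theorem phiF_eventuallyEq_self (hp : 1 < p) (ha : a ≠ 0) :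
    ∀ᶠ y in 𝓝 (p : ℝ), phiF p N a y = (⌊((N : ℝ) - a) / p⌋ : ℝ) * (y - p) := by
  have hp' : (1 : ℝ) < p := by exact_mod_cast hp
  have ha' : (1 : ℝ) ≤ a := by exact_mod_cast Nat.one_le_iff_ne_zero.2 ha
  have hlt : ∀ᶠ y in 𝓝 (p : ℝ),
      -(a : ℝ) * (y - 1) < (⌊((N : ℝ) - a) / p⌋ : ℝ) * (y - p) :=
    ContinuousAt.eventually_lt (by fun_prop) (by fun_prop) (by nlinarith)
  filter_upwards [hlt] with y hy
  simp only [phiF, if_neg ha, max_eq_right hy.le]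

theorem phiF_mem_ENp (hp : 1 < p) (ha : a ≠ 0) (haN : a + p ≤ N) : ENp p N (phiF p N a) := by
  refine (phiF_isMaxOfIntAffine p N a).mem_ENp hp
    (by rw [phiF_one hp.le (by omega), phiF_self hp.le])
    (hasRightSlope_of_eventuallyEq (c := 0)
      (by simpa only [zero_add] using phiF_eventuallyEq_one hp ha haN))
    (hasLeftSlope_of_eventuallyEq (c := 0)
      (by simpa only [zero_add] using phiF_eventuallyEq_self hp ha)) ?_
  have := mul_floor_div_le (x := (N : ℝ) - a) (y := p) (by exact_mod_cast (by omega : 0 < p))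
  linarith

theorem phiF_one_add (hp : 0 < p) (haN : a + p ≤ N) {u : ℝ} (hu : 0 ≤ u)
    (hup : (a + 1) * u ≤ p - 1) : phiF p N a (1 + u) = -a * u := by
  unfold phiF
  split_ifs with ha
  · simp [ha]
  · have hb := one_le_floor_div hp haN
    have hup' : u ≤ p - 1 := by nlinarith [(Nat.cast_nonneg a : (0 : ℝ) ≤ a)]
    rw [max_eq_left]
    · ring
    · nlinarith [mul_nonneg (sub_nonneg.2 hb) (sub_nonneg.2 hup')]

end phiF

section hMap

variable {p N n : ℕ} {t t' : ℕ → ℝ} {ε : ℝ}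

theorem SimplexConstraints.monotoneOn (hT : SimplexConstraints n t ε) : MonotoneOn t (Icc 1 n) :=
  monotoneOn_of_le_add_one ordConnected_Icc fun i _ hi hi' => (hT.2.1 i hi.1 hi'.2).le

theorem SimplexConstraints.lt_sum_range (hT : SimplexConstraints n t ε) {j : ℕ} (hj : 1 ≤ j)
    (hjn : j ≤ n) : t 0 < ∑ i ∈ Finset.range (j + 1), t i := by
  rw [Finset.sum_range_succ', lt_add_iff_pos_left]
  exact Finset.sum_pos (fun i hi => hT.1 (i + 1) (by omega) (by simp at hi; omega))
    (Finset.nonempty_range_iff.2 (by omega))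

theorem hMap_isMaxOfIntAffine (p N : ℕ) (t : ℕ → ℝ) : IsMaxOfIntAffine (hMap p N t) :=
  IsMaxOfIntAffine.finset_sup' _ fun _ _ => (phiF_isMaxOfIntAffine p N _).sub_const _

/-- At a common zero of the `φ_a`, the term `j = 0` is the strict maximum, since `t_i > 0`
for `i ≥ 1`. -/
theorem hMap_eventuallyEq (hT : SimplexConstraints (N - p) t ε) {x₀ : ℝ}
    (hφ : ∀ a ≤ N - p, phiF p N a x₀ = 0) :
    ∀ᶠ y in 𝓝 x₀, hMap p N t y = phiF p N (N - p) y - t 0 := by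
  have := Finset.eventually_sup'_eq_of_lt (s := Finset.range (N - p + 1)) (by simp)
    (F := fun j y => phiF p N (N - p - j) y - ∑ i ∈ Finset.range (j + 1), t i)
    (x₀ := x₀) (j₀ := 0) (by simp)
    (fun j _ => ((phiF_isMaxOfIntAffine _ _ _).continuous.sub continuous_const).continuousAt)
    (fun j hj hne => by
      have hj := Finset.mem_range.1 hj
      rw [hφ _ (Nat.sub_le _ _), hφ _ (Nat.sub_le _ _), Finset.sum_range_one]
      linarith [hT.lt_sum_range (j := j) (by omega) (by omega)])
  simp only [Nat.sub_zero, zero_add, Finset.sum_range_one] at this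
  exact this

theorem floor_div_eq_one (hN : p ≤ N) (hp : 0 < p) :
    ⌊((N : ℝ) - (N - p : ℕ)) / p⌋ = 1 := by
  rw [Nat.cast_sub hN, sub_sub_cancel, div_self (by exact_mod_cast hp.ne'), Int.floor_one]

theorem hMap_mem_ENp (hp : 1 < p) (hN : p < N) (hT : SimplexConstraints (N - p) t ε) :
    ENp p N (hMap p N t) := by
  have h₁ := hMap_eventuallyEq hT (x₀ := 1) fun a ha => phiF_one hp.le (by omega)
  have hₚ := hMap_eventuallyEq hT (x₀ := p) fun a _ => phiF_self hp.le
  refine (hMap_isMaxOfIntAffine p N t).mem_ENp hp (s₁ := -(N - p : ℕ)) (sₚ := 1) ?_ ?_ ?_ ?_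
  · rw [h₁.self_of_nhds, hₚ.self_of_nhds, phiF_one hp.le (by omega), phiF_self hp.le]
  · refine hasRightSlope_of_eventuallyEq (c := -t 0) ?_
    filter_upwards [h₁, phiF_eventuallyEq_one (p := p) (N := N) (a := N - p) hp (by omega)
      (by omega)] with y hy hφ
    rw [hy, hφ]
    ring
  · refine hasLeftSlope_of_eventuallyEq (c := -t 0) ?_
    filter_upwards [hₚ, phiF_eventuallyEq_self (p := p) (N := N) (a := N - p) hp (by omega)]
      with y hy hφ
    rw [hy, hφ, floor_div_eq_one hN.le (by omega)]
    push_cast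
    ring
  · rw [Nat.cast_sub hN.le]
    linarith

/-- The `j`-th term is the largest when `t_j ≤ u ≤ t_{j+1}`. -/
theorem hMap_one_add (hN : p ≤ N) (hp : 0 < p) (t : ℕ → ℝ) {u : ℝ} (hu : 0 ≤ u)
    (hup : ((N : ℝ) - p + 1) * u ≤ p - 1) :
    hMap p N t (1 + u) = (Finset.range (N - p + 1)).sup' (by simp)
      fun j => -((N : ℝ) - p) * u - t 0 + ∑ i ∈ Finset.range j, (u - t (i + 1)) := by
  refine Finset.sup'_congr _ rfl fun j hj => ?_
  have hj : j ≤ N - p := Nat.lt_succ_iff.1 (Finset.mem_range.1 hj)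
  have hcast : ((N - p - j : ℕ) : ℝ) = N - p - j := by
    rw [Nat.cast_sub hj, Nat.cast_sub hN]
  have hj' : (j : ℝ) ≤ N - p := by
    rw [← Nat.cast_sub hN]; exact_mod_cast hj
  rw [phiF_one_add hp (by omega) hu (by rw [hcast]; nlinarith), hcast, Finset.sum_range_succ',
    Finset.sum_sub_distrib, Finset.sum_const, Finset.card_range, nsmul_eq_mul]
  ring

theorem hMap_one (hp : 1 < p) (hN : p ≤ N) (hT : SimplexConstraints (N - p) t ε) :
    hMap p N t 1 = -t 0 := by
  rw [(hMap_eventuallyEq hT fun a ha => phiF_one hp.le (by omega)).self_of_nhds,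
    phiF_one hp.le (by omega), zero_sub]

/-- At `x = 1 + u` with `t_{j+1} < u < t'_{j+1}`, the maximum defining `h(t')` is attained at
its `j`-th term, which `h(t)` shares and exceeds with its `(j+1)`-st term. -/
theorem exists_hMap_lt_of_lt (hp : 1 < p) (hN : p ≤ N)
    (hε : ε ≤ ((p : ℝ) - 1) / ((N : ℝ) - p + 1)) (hT : SimplexConstraints (N - p) t ε)
    (hT' : SimplexConstraints (N - p) t' ε) {j : ℕ} (hj : j + 1 ≤ N - p)
    (heq : ∀ i ≤ j, t i = t' i) (hlt : t (j + 1) < t' (j + 1)) :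
    ∃ x ∈ Icc 1 (p : ℝ), hMap p N t' x < hMap p N t x := by
  obtain ⟨u, hu, hu'⟩ := exists_between hlt
  have hu₀ : 0 < u := by linarith [hT.1 (j + 1) (by omega) hj]
  have huε : u ≤ ε := by linarith [hT'.2.2 (j + 1) (by omega) hj]
  have hNp : (0 : ℝ) ≤ N - p := by rw [← Nat.cast_sub hN]; positivity
  have hup : ((N : ℝ) - p + 1) * u ≤ p - 1 := (le_div_iff₀' (by linarith)).1 (huε.trans hε)
  have hup' : u ≤ p - 1 := by nlinarith
  set G : (ℕ → ℝ) → ℕ → ℝ :=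
    fun t j => -((N : ℝ) - p) * u - t 0 + ∑ i ∈ Finset.range j, (u - t (i + 1))
  have hG : G t' j = G t j := by
    simp only [G, heq 0 (Nat.zero_le _)]
    congr 1
    exact Finset.sum_congr rfl fun i hi => by rw [heq (i + 1) (Finset.mem_range.1 hi)]
  have hupper : hMap p N t' (1 + u) ≤ G t' j := by
    rw [hMap_one_add hN (by omega) t' hu₀.le hup]
    refine Finset.sup'_le _ _ fun j' hj' => (add_le_add_iff_left _).2
      (Finset.sum_range_le_sum_range_of_nonneg_of_nonpos (n := N - p)
        (Nat.lt_succ_iff.1 (Finset.mem_range.1 hj')) (fun i hi => ?_) (fun i hi hin => ?_))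
    · rw [← heq (i + 1) hi]
      have := hT.monotoneOn ⟨by omega, by omega⟩ ⟨by omega, hj⟩ (by omega : i + 1 ≤ j + 1)
      linarith
    · have := hT'.monotoneOn ⟨by omega, hj⟩ ⟨by omega, by omega⟩ (by omega : j + 1 ≤ i + 1)
      linarith
  have hlower : G t (j + 1) ≤ hMap p N t (1 + u) := by
    rw [hMap_one_add hN (by omega) t hu₀.le hup]
    exact Finset.le_sup' (fun j => G t j) (Finset.mem_range.2 (by omega))
  have hstep : G t (j + 1) = G t j + (u - t (j + 1)) := by
    simp only [G, Finset.sum_range_succ]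
    ring
  exact ⟨1 + u, ⟨by linarith, by linarith⟩, by linarith⟩

theorem eq_of_hMap_eqOn (hp : 1 < p) (hN : p ≤ N)
    (hε : ε ≤ ((p : ℝ) - 1) / ((N : ℝ) - p + 1)) (hT : SimplexConstraints (N - p) t ε)
    (hT' : SimplexConstraints (N - p) t' ε)
    (h : ∀ x ∈ Icc (1 : ℝ) p, hMap p N t x = hMap p N t' x) :
    ∀ i ≤ N - p, t i = t' i := by
  intro i
  induction i using Nat.strong_induction_on with
  | _ i ih =>
    intro hi
    rcases i with _ | j
    · have := h 1 ⟨le_rfl, by exact_mod_cast hp.le⟩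
      rw [hMap_one hp hN hT, hMap_one hp hN hT'] at this
      linarith
    · have heq : ∀ i ≤ j, t i = t' i := fun i hij => ih i (by omega) (by omega)
      rcases lt_trichotomy (t (j + 1)) (t' (j + 1)) with hlt | heq' | hgt
      · obtain ⟨x, hx, hlt⟩ := exists_hMap_lt_of_lt hp hN hε hT hT' hi heq hlt
        linarith [h x hx]
      · exact heq'
      · obtain ⟨x, hx, hlt⟩ := exists_hMap_lt_of_lt hp hN hε hT' hT hi
          (fun i hij => (heq i hij).symm) hgt
        linarith [h x hx]

theorem abs_hMap_sub_hMap_lt {δ : ℝ} (hδ : ∀ i ≤ N - p, |t i - t' i| < δ) (x : ℝ) :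
    |hMap p N t x - hMap p N t' x| < ((N - p : ℕ) + 1) * δ := by
  refine Finset.abs_sup'_sub_sup'_lt _ fun j hj => ?_
  have hj : j ≤ N - p := Nat.lt_succ_iff.1 (Finset.mem_range.1 hj)
  have hδ₀ : 0 < δ := (abs_nonneg _).trans_lt (hδ 0 (Nat.zero_le _))
  calc |phiF p N (N - p - j) x - ∑ i ∈ Finset.range (j + 1), t i -
        (phiF p N (N - p - j) x - ∑ i ∈ Finset.range (j + 1), t' i)|
      = |∑ i ∈ Finset.range (j + 1), (t i - t' i)| := by
        rw [Finset.sum_sub_distrib, sub_sub_sub_cancel_left, abs_sub_comm]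
    _ ≤ ∑ i ∈ Finset.range (j + 1), |t i - t' i| := Finset.abs_sum_le_sum_abs _ _
    _ < ∑ _i ∈ Finset.range (j + 1), δ :=
        Finset.sum_lt_sum_of_nonempty (by simp) fun i hi =>
          hδ i (by have := Finset.mem_range.1 hi; omega)
    _ = (j + 1) * δ := by simp
    _ ≤ ((N - p : ℕ) + 1) * δ := by gcongr

end hMap

/-- (a) each `φ_a` (for `1 ≤ a ≤ N−p`) belongs to `E_{N,p}`; (b) for
`0 < ε ≤ (p−1)/(N−p+1)` the map `h` takes values in `E_{N,p}`, is injective, and is continuous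
for the supremum distance on `E_{N,p}`. -/
theorem statement13 (p N : ℕ) (hp : p.Prime) (hN : p < N) :
    (∀ a : ℕ, 1 ≤ a → a ≤ N - p → ENp p N (phiF p N a)) ∧
    (∀ ε : ℝ, 0 < ε → ε ≤ ((p : ℝ) - 1) / ((N : ℝ) - p + 1) →
      (∀ t : ℕ → ℝ, SimplexConstraints (N - p) t ε → ENp p N (hMap p N t)) ∧
      (∀ t t' : ℕ → ℝ, SimplexConstraints (N - p) t ε → SimplexConstraints (N - p) t' ε →
        (∀ x ∈ Set.Icc (1 : ℝ) p, hMap p N t x = hMap p N t' x) →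
        ∀ i, i ≤ N - p → t i = t' i) ∧
      (∀ t : ℕ → ℝ, SimplexConstraints (N - p) t ε → ∀ η : ℝ, 0 < η →
        ∃ δ : ℝ, 0 < δ ∧ ∀ t' : ℕ → ℝ, SimplexConstraints (N - p) t' ε →
          (∀ i, i ≤ N - p → |t i - t' i| < δ) →
          ∀ x ∈ Set.Icc (1 : ℝ) p, |hMap p N t x - hMap p N t' x| < η)) := by
  have hp₁ := hp.one_lt
  refine ⟨fun a ha haN => phiF_mem_ENp hp₁ (by omega) (by omega), fun ε _ hε =>
    ⟨fun t hT => hMap_mem_ENp hp₁ hN hT,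
      fun t t' hT hT' h => eq_of_hMap_eqOn hp₁ hN.le hε hT hT' h,
      fun t _ η hη => ⟨η / ((N - p : ℕ) + 1), by positivity, fun t' _ hδ x _ => ?_⟩⟩⟩
  have := abs_hMap_sub_hMap_lt hδ x
  rwa [mul_div_cancel₀ _ (by positivity)] at this
end

section
/- Fix a prime p and an integer N > p. For every f ∈ E_{N,p} and every x ∈ (1,p) there exists an integer a with 0 ≤ a ≤ N−p such that f(z) − f(x) ≥ φ_a(z) − φ_a(x) for all z ∈ [1,p]. -/
/-!
At `x ∈ (1,p)` the left and right slopes `m⁻`, `m⁺` of `f` are integers and are subgradients of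
`f` on `[1,p]`, as are the slopes `m₁` at `1` and `mₚ` at `p`, and the defining inequality of
`E_{N,p}` reads `-m₁ + p mₚ ≤ N`. If `m⁻ ≤ 0 ≤ m⁺`, `x` minimises `f` and `a = 0` works.
If `m⁺ < 0`, take `a = -m⁺`: the branch `-a(z-1)` of `φ_a` is the supporting line at `x`, and
since `f(x) < f(1) = f(p)` forces `mₚ ≥ 1`, the slope `b` of the other branch is at least `mₚ`,
so that branch is dominated by the supporting line at `p`. The case `m⁻ > 0` is symmetric,
with `a = N - p m⁻`, for which `b = m⁻` exactly.
-/

open Set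

section Subgradient

variable {𝕜 : Type*} [Field 𝕜] [LinearOrder 𝕜] [IsStrictOrderedRing 𝕜]

def HasSubgradientWithin (f : 𝕜 → 𝕜) (m : 𝕜) (s : Set 𝕜) (x : 𝕜) : Prop :=
  ∀ z ∈ s, f x + m * (z - x) ≤ f z

variable {f : 𝕜 → 𝕜} {s : Set 𝕜} {m m' x y : 𝕜}

theorem ConvexOn.hasSubgradientWithin_of_eqOn_Icc (hf : ConvexOn 𝕜 s f) {u v : 𝕜}
    (hu : u ∈ s) (hv : v ∈ s) (huv : u < v)
    (haff : ∀ w ∈ Icc u v, f w = f x + m * (w - x)) : HasSubgradientWithin f m s x := by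
  have hfu := haff u ⟨le_rfl, huv.le⟩
  have hfv := haff v ⟨huv.le, le_rfl⟩
  have hslope : (f v - f u) / (v - u) = m := by
    rw [div_eq_iff (sub_pos.2 huv).ne', hfu, hfv]
    ring
  intro z hz
  rcases lt_or_ge z u with hzu | hzu
  · have h := hf.slope_mono_adjacent hz hv hzu huv
    rw [hslope, div_le_iff₀ (sub_pos.2 hzu)] at h
    linarith
  rcases le_or_gt z v with hzv | hzv
  · exact (haff z ⟨hzu, hzv⟩).ge
  · have h := hf.slope_mono_adjacent hu hz huv hzv
    rw [hslope, le_div_iff₀ (sub_pos.2 hzv)] at h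
    linarith

theorem HasSubgradientWithin.le_of_lt (hx : HasSubgradientWithin f m s x)
    (hy : HasSubgradientWithin f m' s y) (hxs : x ∈ s) (hys : y ∈ s) (hxy : x < y) :
    m ≤ m' :=
  le_of_mul_le_mul_right (by linarith [hx y hys, hy x hxs]) (sub_pos.2 hxy)

theorem HasSubgradientWithin.pos_of_lt (hy : HasSubgradientWithin f m s y) (hxs : x ∈ s)
    (hxy : x < y) (hfxy : f x < f y) : 0 < m := by
  nlinarith [hy x hxs]

theorem HasSubgradientWithin.neg_of_lt (hy : HasSubgradientWithin f m s y) (hxs : x ∈ s)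
    (hyx : y < x) (hfxy : f x < f y) : m < 0 := by
  nlinarith [hy x hxs]

theorem HasSubgradientWithin.isMinOn (hl : HasSubgradientWithin f m s x)
    (hr : HasSubgradientWithin f m' s x) (hm : m ≤ 0) (hm' : 0 ≤ m') : IsMinOn f s x :=
  isMinOn_iff.2 fun z hz => by
    rcases le_total x z with h | h
    · nlinarith [hr z hz]
    · nlinarith [hl z hz]

end Subgradient

theorem HasRightSlope.eq_of_eqOn_Icc {f : ℝ → ℝ} {x s v m : ℝ} (hs : HasRightSlope f x s)
    (hxv : x < v) (haff : ∀ w ∈ Icc x v, f w = f x + m * (w - x)) : s = m := by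
  obtain ⟨δ, hδ, hfδ⟩ := hs
  obtain ⟨y, hxy, hy⟩ := exists_between (lt_min (lt_add_of_pos_right x hδ) hxv)
  have h₁ := hfδ y ⟨hxy.le, (lt_min_iff.1 hy).1⟩
  have h₂ := haff y ⟨hxy.le, (lt_min_iff.1 hy).2.le⟩
  exact mul_right_cancel₀ (sub_pos.2 hxy).ne' (add_left_cancel (h₁.symm.trans h₂))

theorem HasLeftSlope.eq_of_eqOn_Icc {f : ℝ → ℝ} {x s u m : ℝ} (hs : HasLeftSlope f x s)
    (hux : u < x) (haff : ∀ w ∈ Icc u x, f w = f x + m * (w - x)) : s = m := by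
  obtain ⟨δ, hδ, hfδ⟩ := hs
  obtain ⟨y, hy, hyx⟩ := exists_between (max_lt (sub_lt_self x hδ) hux)
  have h₁ := hfδ y ⟨(max_lt_iff.1 hy).1, hyx.le⟩
  have h₂ := haff y ⟨(max_lt_iff.1 hy).2.le, hyx.le⟩
  exact mul_right_cancel₀ (sub_neg.2 hyx).ne (add_left_cancel (h₁.symm.trans h₂))

theorem exists_mem_Ico_succ_s14 {α : Type*} [LinearOrder α] (t : ℕ → α) {x : α} :
    ∀ {n : ℕ}, x ∈ Ico (t 0) (t n) → ∃ i < n, x ∈ Ico (t i) (t (i + 1))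
  | 0, h => absurd h (by simp)
  | n + 1, h => by
    by_cases hn : t n ≤ x
    · exact ⟨n, n.lt_succ_self, hn, h.2⟩
    · obtain ⟨i, hi, hxi⟩ := exists_mem_Ico_succ_s14 t ⟨h.1, not_le.1 hn⟩
      exact ⟨i, hi.trans n.lt_succ_self, hxi⟩

theorem exists_mem_Ioc_succ {α : Type*} [LinearOrder α] (t : ℕ → α) {x : α} :
    ∀ {n : ℕ}, x ∈ Ioc (t 0) (t n) → ∃ i < n, x ∈ Ioc (t i) (t (i + 1))
  | 0, h => absurd h (by simp)
  | n + 1, h => by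
    by_cases hn : t n < x
    · exact ⟨n, n.lt_succ_self, hn, h.2⟩
    · obtain ⟨i, hi, hxi⟩ := exists_mem_Ioc_succ t ⟨h.1, not_lt.1 hn⟩
      exact ⟨i, hi.trans n.lt_succ_self, hxi⟩

namespace ENp

variable {p N : ℕ} {f : ℝ → ℝ} {x : ℝ}

theorem exists_int_subgradient_right (hf : ENp p N f) (hx : x ∈ Ico 1 (p : ℝ)) :
    ∃ (m : ℤ) (v : ℝ), x < v ∧ (∀ w ∈ Icc x v, f w = f x + m * (w - x)) ∧
      HasSubgradientWithin f m (Icc 1 p) x := by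
  obtain ⟨-, hconv, ⟨n, t, -, ht₀, htₙ, -, haff⟩, -⟩ := hf
  obtain ⟨i, hi, hti, hxt⟩ := exists_mem_Ico_succ_s14 t (n := n) (by rwa [ht₀, htₙ])
  obtain ⟨m, c, hmc⟩ := haff i hi
  have hv : x < min (t (i + 1)) p := lt_min hxt hx.2
  have haffx : ∀ w ∈ Icc x (min (t (i + 1)) p), f w = f x + m * (w - x) := fun w hw => by
    rw [hmc w ⟨hti.trans hw.1, hw.2.trans (min_le_left _ _)⟩, hmc x ⟨hti, hxt.le⟩]
    ring
  exact ⟨m, _, hv, haffx, hconv.hasSubgradientWithin_of_eqOn_Icc ⟨hx.1, hx.2.le⟩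
    ⟨hx.1.trans hv.le, min_le_right _ _⟩ hv haffx⟩

theorem exists_int_subgradient_left (hf : ENp p N f) (hx : x ∈ Ioc 1 (p : ℝ)) :
    ∃ (m : ℤ) (u : ℝ), u < x ∧ (∀ w ∈ Icc u x, f w = f x + m * (w - x)) ∧
      HasSubgradientWithin f m (Icc 1 p) x := by
  obtain ⟨-, hconv, ⟨n, t, -, ht₀, htₙ, -, haff⟩, -⟩ := hf
  obtain ⟨i, hi, htx, hxt⟩ := exists_mem_Ioc_succ t (n := n) (by rwa [ht₀, htₙ])
  obtain ⟨m, c, hmc⟩ := haff i hi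
  have hu : max (t i) 1 < x := max_lt htx hx.1
  have haffx : ∀ w ∈ Icc (max (t i) 1) x, f w = f x + m * (w - x) := fun w hw => by
    rw [hmc w ⟨(le_max_left _ _).trans hw.1, hw.2.trans hxt⟩, hmc x ⟨htx.le, hxt⟩]
    ring
  exact ⟨m, _, hu, haffx, hconv.hasSubgradientWithin_of_eqOn_Icc
    ⟨le_max_right _ _, hu.le.trans hx.2⟩ ⟨hx.1.le, hx.2⟩ hu haffx⟩

theorem exists_endpoint_subgradients (hf : ENp p N f) (hp : (1 : ℝ) < p) :
    ∃ m₀ mₚ : ℤ, f 1 = f p ∧ HasSubgradientWithin f m₀ (Icc 1 p) 1 ∧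
      HasSubgradientWithin f mₚ (Icc 1 p) p ∧ -m₀ + p * mₚ ≤ N := by
  obtain ⟨m₀, v, hv, haff₀, h₀⟩ := hf.exists_int_subgradient_right (left_mem_Ico.2 hp)
  obtain ⟨mₚ, u, hu, haffₚ, hₚ⟩ := hf.exists_int_subgradient_left (right_mem_Ioc.2 hp)
  obtain ⟨-, -, -, hfp, s₁, sₚ, hs₁, hsₚ, hN⟩ := hf
  rw [hs₁.eq_of_eqOn_Icc hv haff₀, hsₚ.eq_of_eqOn_Icc hu haffₚ] at hN
  exact ⟨m₀, mₚ, hfp, h₀, hₚ, by exact_mod_cast hN⟩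

end ENp

section Extremal

variable {p N : ℕ} {f : ℝ → ℝ} {x : ℝ} {m₀ mₚ m : ℤ}

theorem exists_phiF_of_neg_subgradient (hx : x ∈ Ioo 1 (p : ℝ)) (hfp : f 1 = f p)
    (h₀ : HasSubgradientWithin f m₀ (Icc 1 p) 1) (hₚ : HasSubgradientWithin f mₚ (Icc 1 p) p)
    (hN : -m₀ + p * mₚ ≤ N) (hm : m < 0) (hxm : HasSubgradientWithin f m (Icc 1 p) x) :
    ∃ a ≤ N - p, ∀ z ∈ Icc 1 (p : ℝ), phiF p N a z - phiF p N a x ≤ f z - f x := by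
  obtain ⟨a, rfl⟩ := Int.exists_eq_neg_ofNat hm.le
  have ha : 0 < a := by omega
  have hp : (1 : ℝ) < p := hx.1.trans hx.2
  have h1I : (1 : ℝ) ∈ Icc 1 (p : ℝ) := left_mem_Icc.2 hp.le
  have hxI : x ∈ Icc 1 (p : ℝ) := ⟨hx.1.le, hx.2.le⟩
  push_cast at hxm
  have hfx1 : f x + a * (x - 1) ≤ f 1 := by linarith [hxm 1 h1I]
  have hfxp : f x < f p := by
    have : (0 : ℝ) < a * (x - 1) := mul_pos (by exact_mod_cast ha) (sub_pos.2 hx.1)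
    linarith
  have hmₚ : 0 < mₚ := by exact_mod_cast hₚ.pos_of_lt hxI hx.2 hfxp
  have hm₀ : m₀ ≤ -a := by exact_mod_cast h₀.le_of_lt hxm h1I hxI hx.1
  have hpmₚ : mₚ * p ≤ (N : ℤ) - a := by linarith
  have hb : (mₚ : ℝ) ≤ ⌊((N : ℝ) - a) / p⌋ := by
    refine Int.cast_le.2 (Int.le_floor.2 ?_)
    rw [le_div_iff₀ (by linarith)]
    exact_mod_cast hpmₚ
  have hpp : (p : ℤ) ≤ p * mₚ := le_mul_of_one_le_right (by positivity) hmₚ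
  refine ⟨a, by omega, fun z hz => ?_⟩
  rw [phiF, phiF, if_neg ha.ne', if_neg ha.ne', sub_le_iff_le_add]
  refine (max_le ?_ ?_).trans (add_le_add_right (le_max_left _ _) _)
  · linarith [hxm z hz]
  · have hbz := mul_le_mul_of_nonpos_right hb (sub_nonpos.2 hz.2)
    linarith [hₚ z hz]

theorem exists_phiF_of_pos_subgradient (hx : x ∈ Ioo 1 (p : ℝ)) (hfp : f 1 = f p)
    (h₀ : HasSubgradientWithin f m₀ (Icc 1 p) 1) (hₚ : HasSubgradientWithin f mₚ (Icc 1 p) p)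
    (hN : -m₀ + p * mₚ ≤ N) (hm : 0 < m) (hxm : HasSubgradientWithin f m (Icc 1 p) x) :
    ∃ a ≤ N - p, ∀ z ∈ Icc 1 (p : ℝ), phiF p N a z - phiF p N a x ≤ f z - f x := by
  have hp : (1 : ℝ) < p := hx.1.trans hx.2
  have hpI : (p : ℝ) ∈ Icc 1 (p : ℝ) := right_mem_Icc.2 hp.le
  have hxI : x ∈ Icc 1 (p : ℝ) := ⟨hx.1.le, hx.2.le⟩
  have hfxp : f x + m * (p - x) ≤ f p := by linarith [hxm p hpI]
  have hfx1 : f x < f 1 := by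
    have : (0 : ℝ) < m * (p - x) := mul_pos (by exact_mod_cast hm) (sub_pos.2 hx.2)
    linarith
  have hm₀ : m₀ < 0 := by exact_mod_cast h₀.neg_of_lt hxI hx.1 hfx1
  have hmmₚ : m ≤ mₚ := by exact_mod_cast hxm.le_of_lt hₚ hxI hpI hx.2
  have hpm : (p : ℤ) * m ≤ p * mₚ := mul_le_mul_of_nonneg_left hmmₚ (by positivity)
  have hpp : (p : ℤ) ≤ p * m := le_mul_of_one_le_right (by positivity) hm
  obtain ⟨a, ha⟩ : ∃ a : ℕ, (a : ℤ) = N - p * m :=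
    ⟨(N - p * m : ℤ).toNat, Int.toNat_of_nonneg (by linarith)⟩
  have ha₀ : 0 < a := by omega
  have haR : (a : ℝ) = N - p * m := by exact_mod_cast ha
  have hb : ⌊((N : ℝ) - a) / p⌋ = m := by
    rw [haR, sub_sub_cancel, mul_div_cancel_left₀ _ (by positivity), Int.floor_intCast]
  have hm₀a : -(a : ℝ) ≤ m₀ := by rw [haR]; exact_mod_cast (by linarith : -((N : ℤ) - p * m) ≤ m₀)
  refine ⟨a, by omega, fun z hz => ?_⟩
  rw [phiF, phiF, if_neg ha₀.ne', if_neg ha₀.ne', hb, sub_le_iff_le_add]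
  refine (max_le ?_ ?_).trans (add_le_add_right (le_max_right _ _) _)
  · have haz := mul_le_mul_of_nonneg_right hm₀a (sub_nonneg.2 hz.1)
    linarith [h₀ z hz]
  · linarith [hxm z hz]

end Extremal

theorem statement14_general (p N : ℕ)
    (f : ℝ → ℝ) (hf : ENp p N f) (x : ℝ) (hx : x ∈ Set.Ioo (1 : ℝ) p) :
    ∃ a : ℕ, a ≤ N - p ∧ ∀ z ∈ Set.Icc (1 : ℝ) p,
      f z - f x ≥ phiF p N a z - phiF p N a x := by
  obtain ⟨m₀, mₚ, hfp, h₀, hₚ, hN⟩ := hf.exists_endpoint_subgradients (hx.1.trans hx.2)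
  obtain ⟨mR, -, -, -, hR⟩ := hf.exists_int_subgradient_right ⟨hx.1.le, hx.2⟩
  obtain ⟨mL, -, -, -, hL⟩ := hf.exists_int_subgradient_left ⟨hx.1, hx.2.le⟩
  by_cases hRneg : mR < 0
  · exact exists_phiF_of_neg_subgradient hx hfp h₀ hₚ hN hRneg hR
  by_cases hLpos : 0 < mL
  · exact exists_phiF_of_pos_subgradient hx hfp h₀ hₚ hN hLpos hL
  have hmin := hL.isMinOn hR (by exact_mod_cast not_lt.1 hLpos) (by exact_mod_cast not_lt.1 hRneg)
  exact ⟨0, Nat.zero_le _, fun z hz => by simpa [phiF] using isMinOn_iff.1 hmin z hz⟩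

/-- For every `f ∈ E_{N,p}` and every `x ∈ (1,p)` there is an integer
`0 ≤ a ≤ N−p` with `f(z) − f(x) ≥ φ_a(z) − φ_a(x)` for all `z ∈ [1,p]`. -/
theorem statement14 (p N : ℕ) (hp : p.Prime) (hN : p < N)
    (f : ℝ → ℝ) (hf : ENp p N f) (x : ℝ) (hx : x ∈ Set.Ioo (1 : ℝ) p) :
    ∃ a : ℕ, a ≤ N - p ∧ ∀ z ∈ Set.Icc (1 : ℝ) p,
      f z - f x ≥ phiF p N a z - phiF p N a x :=
  statement14_general p N f hf x hx
end

section
/- Fix a prime p and an integer N > p. For f ∈ E_{N,p} and 0 ≤ a ≤ N−p define γ_a(f) := −max_{z∈[1,p]} (φ_a(z) − f(z)). Then every f ∈ E_{N,p} satisfies f(x) = max_{0 ≤ a ≤ N−p} (φ_a(x) + γ_a(f)) for all x ∈ [1,p]. -/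
/-- `γ_a(f) = −max_{z ∈ [1,p]} (φ_a(z) − f(z))`. -/
noncomputable def gammaF (p N a : ℕ) (f : ℝ → ℝ) : ℝ :=
  -sSup {y : ℝ | ∃ z ∈ Set.Icc (1 : ℝ) p, y = phiF p N a z - f z}

/-!
Since `φ_a + γ_a(f) ≤ f` on `[1,p]` for every `a`, it suffices to find, for each `x`, an `a` such
that `φ_a - f` attains its maximum on `[1,p]` at `x`. Let `s` be the (integer) slope of an affine
piece of `f` through `x`; it is a supporting slope at `x` and lies between the endpoint slopes
`s₁ = f'₊(1)` and `s_p = f'₋(p)`, the latter being an integer too. For `s = 0` take `a = 0`.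
For `s < 0` take `a = -s`: the branch `-a(z-1)` of `φ_a` has the supporting slope, and the branch
`b(z-p)` has slope `b ≥ s_p`, so it stays below `f - f(p)`, and `f(p) = f(1)` is above the
supporting line at `x`. Here `s_p ≥ 1`, as otherwise `f(1) = f(p)` would be the minimum of `f`,
contradicting `s₁ ≤ s < 0`. For `s > 0` take `a = N - ps`, so that `b = s`, and argue
symmetrically. The condition `-s₁ + p s_p ≤ N` is exactly what puts `a` in `[0, N-p]` and gives
`b ≥ s_p` (resp. `a ≥ -s₁`).
-/

open Set

def IsSupportingSlope (f : ℝ → ℝ) (S : Set ℝ) (x m : ℝ) : Prop :=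
  ∀ z ∈ S, f x + m * (z - x) ≤ f z

theorem IsSupportingSlope.le {f : ℝ → ℝ} {S : Set ℝ} {x y m m' : ℝ}
    (hx : IsSupportingSlope f S x m) (hy : IsSupportingSlope f S y m') (hxS : x ∈ S) (hyS : y ∈ S)
    (hxy : x < y) : m ≤ m' := by
  have h₁ := hx y hyS
  have h₂ := hy x hxS
  nlinarith

theorem ConvexOn.isSupportingSlope_of_eqOn {f : ℝ → ℝ} {S : Set ℝ} {u v m c : ℝ}
    (hf : ConvexOn ℝ S f) (hu : u ∈ S) (hv : v ∈ S) (huv : u < v)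
    (haff : ∀ y ∈ Icc u v, f y = m * y + c) {x : ℝ} (hx : x ∈ Icc u v) :
    IsSupportingSlope f S x m := by
  have hfu := haff u (left_mem_Icc.2 huv.le)
  have hfv := haff v (right_mem_Icc.2 huv.le)
  intro z hz
  rw [haff x hx]
  rcases lt_or_ge z u with hzu | hzu
  · have hs := hf.slope_mono_adjacent hz hv hzu huv
    rw [hfu, hfv, div_le_div_iff₀ (by linarith) (by linarith)] at hs
    nlinarith
  rcases le_or_gt z v with hzv | hzv
  · rw [haff z ⟨hzu, hzv⟩]; linarith
  · have hs := hf.slope_mono_adjacent hu hz huv hzv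
    rw [hfu, hfv, div_le_div_iff₀ (by linarith) (by linarith)] at hs
    nlinarith

theorem HasRightSlope.exists_eqOn {f : ℝ → ℝ} {x s b : ℝ} (h : HasRightSlope f x s)
    (hxb : x < b) :
    ∃ v ∈ Ioc x b, ∀ y ∈ Icc x v, f y = s * y + (f x - s * x) := by
  obtain ⟨δ, hδ, hf⟩ := h
  refine ⟨min (x + δ / 2) b, ⟨lt_min (by linarith) hxb, min_le_right _ _⟩, fun y hy => ?_⟩
  rw [hf y ⟨hy.1, hy.2.trans_lt ((min_le_left _ _).trans_lt (by linarith))⟩]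
  ring

theorem HasLeftSlope.exists_eqOn {f : ℝ → ℝ} {x s a : ℝ} (h : HasLeftSlope f x s)
    (hax : a < x) :
    ∃ u ∈ Ico a x, ∀ y ∈ Icc u x, f y = s * y + (f x - s * x) := by
  obtain ⟨δ, hδ, hf⟩ := h
  refine ⟨max (x - δ / 2) a, ⟨le_max_right _ _, max_lt (by linarith) hax⟩, fun y hy => ?_⟩
  rw [hf y ⟨(lt_max_of_lt_left (by linarith)).trans_le hy.1, hy.2⟩]
  ring

theorem HasLeftSlope.eq_of_eqOn {f : ℝ → ℝ} {x s a m c : ℝ} (h : HasLeftSlope f x s)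
    (hax : a < x) (haff : ∀ y ∈ Icc a x, f y = m * y + c) : s = m := by
  obtain ⟨u, hu, hfu⟩ := h.exists_eqOn hax
  have h₁ := haff u ⟨hu.1, hu.2.le⟩
  have h₂ := haff x ⟨hax.le, le_rfl⟩
  rw [hfu u ⟨le_rfl, hu.2.le⟩, h₂] at h₁
  exact mul_right_cancel₀ (sub_ne_zero.2 hu.2.ne) (by linear_combination h₁)

theorem HasRightSlope.nonneg_of_isMinOn {f : ℝ → ℝ} {x s b : ℝ} (h : HasRightSlope f x s)
    (hxb : x < b) (hmin : IsMinOn f (Icc x b) x) : 0 ≤ s := by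
  obtain ⟨v, hv, hfv⟩ := h.exists_eqOn hxb
  have := isMinOn_iff.1 hmin v ⟨hv.1.le, hv.2⟩
  rw [hfv v ⟨hv.1.le, le_rfl⟩] at this
  nlinarith [hv.1]

theorem ConvexOn.isSupportingSlope_of_hasRightSlope {f : ℝ → ℝ} {A B x s : ℝ}
    (hf : ConvexOn ℝ (Icc A B) f) (hx : x ∈ Ico A B) (h : HasRightSlope f x s) :
    IsSupportingSlope f (Icc A B) x s := by
  obtain ⟨v, hv, hfv⟩ := h.exists_eqOn hx.2
  exact hf.isSupportingSlope_of_eqOn (Ico_subset_Icc_self hx) ⟨hx.1.trans hv.1.le, hv.2⟩ hv.1 hfv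
    ⟨le_rfl, hv.1.le⟩

theorem ConvexOn.isSupportingSlope_of_hasLeftSlope {f : ℝ → ℝ} {A B x s : ℝ}
    (hf : ConvexOn ℝ (Icc A B) f) (hx : x ∈ Ioc A B) (h : HasLeftSlope f x s) :
    IsSupportingSlope f (Icc A B) x s := by
  obtain ⟨u, hu, hfu⟩ := h.exists_eqOn hx.1
  exact hf.isSupportingSlope_of_eqOn ⟨hu.1, hu.2.le.trans hx.2⟩ (Ioc_subset_Icc_self hx) hu.2 hfu
    ⟨hu.2.le, le_rfl⟩

theorem exists_lt_mem_Icc_succ {t : ℕ → ℝ} {n : ℕ} (hn : 0 < n) {x : ℝ}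
    (hx : x ∈ Icc (t 0) (t n)) : ∃ i < n, x ∈ Icc (t i) (t (i + 1)) := by
  induction n, hn using Nat.le_induction with
  | base => exact ⟨0, one_pos, hx⟩
  | succ n hn ih =>
    rcases le_or_gt x (t n) with hxn | hxn
    · obtain ⟨i, hi, hxi⟩ := ih ⟨hx.1, hxn⟩
      exact ⟨i, hi.trans n.lt_succ_self, hxi⟩
    · exact ⟨n, n.lt_succ_self, hxn.le, hx.2⟩

theorem ConvexOn.exists_int_isSupportingSlope_of_partition {f : ℝ → ℝ} {t : ℕ → ℝ} {n : ℕ}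
    (hn : 0 < n) (ht : ∀ i < n, t i < t (i + 1)) (hf : ConvexOn ℝ (Icc (t 0) (t n)) f)
    (hpieces : ∀ i < n, ∃ (m : ℤ) (c : ℝ), ∀ y ∈ Icc (t i) (t (i + 1)), f y = m * y + c)
    {x : ℝ} (hx : x ∈ Icc (t 0) (t n)) :
    ∃ m : ℤ, IsSupportingSlope f (Icc (t 0) (t n)) x m ∧
      (∀ s, IsSupportingSlope f (Icc (t 0) (t n)) (t 0) s → s ≤ m) ∧
      (∀ s, IsSupportingSlope f (Icc (t 0) (t n)) (t n) s → m ≤ s) := by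
  have hmono := (strictMonoOn_Iic_of_lt_succ ht).monotoneOn
  obtain ⟨i, hi, hxi⟩ := exists_lt_mem_Icc_succ hn hx
  obtain ⟨m, c, hmc⟩ := hpieces i hi
  have hti : t i ∈ Icc (t 0) (t n) :=
    ⟨hmono n.zero_le hi.le i.zero_le, hmono hi.le self_mem_Iic hi.le⟩
  have hti' : t (i + 1) ∈ Icc (t 0) (t n) :=
    ⟨hmono n.zero_le hi i.succ_pos.le, hmono hi self_mem_Iic hi⟩
  have hS : ∀ y ∈ Icc (t i) (t (i + 1)), IsSupportingSlope f (Icc (t 0) (t n)) y m :=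
    fun y => hf.isSupportingSlope_of_eqOn hti hti' (ht i hi) hmc
  refine ⟨m, hS x hxi, fun s hs => ?_, fun s hs => ?_⟩
  · exact hs.le (hS _ (right_mem_Icc.2 (ht i hi).le)) (left_mem_Icc.2 (hx.1.trans hx.2)) hti'
      (hti.1.trans_lt (ht i hi))
  · exact (hS _ (left_mem_Icc.2 (ht i hi).le)).le hs hti (right_mem_Icc.2 (hx.1.trans hx.2))
      ((ht i hi).trans_le hti'.2)

theorem continuous_phiF (p N a : ℕ) : Continuous (phiF p N a) := by
  unfold phiF
  split_ifs <;> fun_prop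

theorem phiF_eq_max {p N a : ℕ} (hb : 0 ≤ ⌊((N : ℝ) - a) / p⌋) {x : ℝ} (hx : x ≤ p) :
    phiF p N a x = max (-(a : ℝ) * (x - 1)) (⌊((N : ℝ) - a) / p⌋ * (x - p)) := by
  unfold phiF
  split_ifs with ha
  · subst ha
    simp only [CharP.cast_eq_zero, neg_zero, zero_mul, left_eq_sup]
    exact mul_nonpos_of_nonneg_of_nonpos (by exact_mod_cast hb) (by linarith)
  · rfl

theorem gammaF_eq_neg_sSup_image (p N a : ℕ) (f : ℝ → ℝ) :
    gammaF p N a f = -sSup ((fun z => phiF p N a z - f z) '' Icc 1 p) := by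
  simp only [gammaF, image, eq_comm]

theorem phiF_add_gammaF_le {p N a : ℕ} {f : ℝ → ℝ} (hf : ContinuousOn f (Icc 1 p)) {x : ℝ}
    (hx : x ∈ Icc (1 : ℝ) p) : phiF p N a x + gammaF p N a f ≤ f x := by
  have hbdd : BddAbove ((fun z => phiF p N a z - f z) '' Icc 1 p) :=
    (isCompact_Icc.image_of_continuousOn
      ((continuous_phiF p N a).continuousOn.sub hf)).bddAbove
  have := le_csSup hbdd (mem_image_of_mem _ hx)
  rw [gammaF_eq_neg_sSup_image]
  linarith

theorem gammaF_eq_of_isMaxOn {p N a : ℕ} {f : ℝ → ℝ} {x : ℝ} (hx : x ∈ Icc (1 : ℝ) p)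
    (hmax : IsMaxOn (fun z => phiF p N a z - f z) (Icc 1 p) x) :
    gammaF p N a f = f x - phiF p N a x := by
  have hgreatest : IsGreatest ((fun z => phiF p N a z - f z) '' Icc 1 p) (phiF p N a x - f x) :=
    ⟨mem_image_of_mem _ hx, by rintro _ ⟨z, hz, rfl⟩; exact hmax hz⟩
  rw [gammaF_eq_neg_sSup_image, hgreatest.csSup_eq]
  ring

theorem isMaxOn_phiF_sub_of_neg {p N k : ℕ} {f : ℝ → ℝ} {x sp : ℝ} (hk : k ≠ 0)
    (hx : x ∈ Icc (1 : ℝ) p) (hfp : f 1 = f p)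
    (hxS : IsSupportingSlope f (Icc 1 p) x (-k)) (hpS : IsSupportingSlope f (Icc 1 p) p sp)
    (hb : sp ≤ ⌊((N : ℝ) - k) / p⌋) :
    IsMaxOn (fun z => phiF p N k z - f z) (Icc 1 p) x := by
  have h1 : (1 : ℝ) ∈ Icc 1 (p : ℝ) := ⟨le_rfl, hx.1.trans hx.2⟩
  refine isMaxOn_iff.2 fun z hz => ?_
  simp only [phiF, if_neg hk, ← max_sub_sub_right]
  refine le_max_of_le_left (max_le ?_ ?_)
  · linarith [hxS z hz]
  · nlinarith [hpS z hz, hxS 1 h1, mul_le_mul_of_nonneg_right hb (sub_nonneg.2 hz.2)]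

theorem isMaxOn_phiF_sub_of_pos {p N k : ℕ} {f : ℝ → ℝ} {x s1 : ℝ} (hkN : p * k ≤ N)
    (hx : x ∈ Icc (1 : ℝ) p) (hfp : f 1 = f p)
    (hxS : IsSupportingSlope f (Icc 1 p) x k) (h1S : IsSupportingSlope f (Icc 1 p) 1 s1)
    (hs1 : -((N - p * k : ℕ) : ℝ) ≤ s1) :
    IsMaxOn (fun z => phiF p N (N - p * k) z - f z) (Icc 1 p) x := by
  have hp : (p : ℝ) ∈ Icc 1 (p : ℝ) := ⟨hx.1.trans hx.2, le_rfl⟩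
  have hb : ⌊((N : ℝ) - (N - p * k : ℕ)) / p⌋ = k := by
    rw [Nat.cast_sub hkN, Nat.cast_mul, sub_sub_cancel,
      mul_div_cancel_left₀ _ (by linarith [hp.1]), Int.floor_natCast]
  have hb₀ : 0 ≤ ⌊((N : ℝ) - (N - p * k : ℕ)) / p⌋ := hb ▸ Int.natCast_nonneg k
  refine isMaxOn_iff.2 fun z hz => ?_
  rw [phiF_eq_max hb₀ hz.2, phiF_eq_max hb₀ hx.2, hb, ← max_sub_sub_right, ← max_sub_sub_right]
  push_cast
  refine le_max_of_le_right (max_le ?_ ?_)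
  · nlinarith [h1S z hz, hxS p hp, mul_le_mul_of_nonneg_right hs1 (sub_nonneg.2 hz.1)]
  · linarith [hxS z hz]

theorem exists_isMaxOn_phiF_sub_of_isSupportingSlope {p N : ℕ} {f : ℝ → ℝ} {x s1 : ℝ}
    {s sp : ℤ} (hp : 1 < (p : ℝ)) (hx : x ∈ Icc (1 : ℝ) p) (hfp : f 1 = f p)
    (h1S : IsSupportingSlope f (Icc 1 p) 1 s1) (hpS : IsSupportingSlope f (Icc 1 p) p sp)
    (hxS : IsSupportingSlope f (Icc 1 p) x s) (hs1 : s1 ≤ s) (hsp : s ≤ sp)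
    (hsp_pos : s1 < 0 → 0 < sp) (hN : -s1 + p * sp ≤ N) :
    ∃ a ∈ Finset.range (N - p + 1), IsMaxOn (fun z => phiF p N a z - f z) (Icc 1 p) x := by
  have h1 : (1 : ℝ) ∈ Icc 1 (p : ℝ) := ⟨le_rfl, hp.le⟩
  have hpp : (p : ℝ) ∈ Icc 1 (p : ℝ) := ⟨hp.le, le_rfl⟩
  have hs1_nonpos : s1 ≤ 0 := by nlinarith [h1S p hpp]
  have hsp_nonneg : (0 : ℝ) ≤ sp := by nlinarith [hpS 1 h1]
  rcases lt_trichotomy s 0 with hs | rfl | hs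
  · obtain ⟨k, rfl⟩ := Int.exists_eq_neg_ofNat hs.le
    have hk : k ≠ 0 := by rintro rfl; simp at hs
    have hsp_one : (1 : ℝ) ≤ sp := by
      have : 0 < sp := hsp_pos (hs1.trans_lt (by exact_mod_cast hs))
      exact_mod_cast this
    push_cast at hs1 hxS
    refine ⟨k, ?_, isMaxOn_phiF_sub_of_neg hk hx hfp hxS hpS ?_⟩
    · have hkN : k + p ≤ N := by exact_mod_cast (by nlinarith : (k : ℝ) + p ≤ N)
      exact Finset.mem_range.2 (by omega)
    · have : (sp : ℝ) ≤ ((N : ℝ) - k) / p := by rw [le_div_iff₀ (by linarith)]; nlinarith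
      exact_mod_cast Int.le_floor.2 this
  · exact ⟨0, by simp, isMaxOn_iff.2 fun z hz => by simpa [phiF] using hxS z hz⟩
  · lift s to ℕ using hs.le
    have hpsp : (p : ℝ) * s ≤ p * sp :=
      mul_le_mul_of_nonneg_left (by exact_mod_cast hsp) (by linarith)
    have hsN : p * s ≤ N := by exact_mod_cast (by linarith : (p : ℝ) * s ≤ N)
    push_cast at hs1 hxS
    refine ⟨N - p * s, ?_, isMaxOn_phiF_sub_of_pos hsN hx hfp hxS h1S ?_⟩
    · rw [Finset.mem_range]
      have : p ≤ p * s := Nat.le_mul_of_pos_right p (by exact_mod_cast hs)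
      omega
    · rw [Nat.cast_sub hsN]
      push_cast
      linarith

theorem ENp.exists_isMaxOn_phiF_sub {p N : ℕ} {f : ℝ → ℝ} (hf : ENp p N f) {x : ℝ}
    (hx : x ∈ Icc (1 : ℝ) p) :
    ∃ a ∈ Finset.range (N - p + 1), IsMaxOn (fun z => phiF p N a z - f z) (Icc 1 p) x := by
  obtain ⟨-, hconv, ⟨n, t, hn, ht0, htn, ht, hpieces⟩, hfp, s1, sp, hs1, hsp, hN⟩ := hf
  have hp : (1 : ℝ) < p := ht0 ▸ htn ▸ strictMonoOn_Iic_of_lt_succ ht n.zero_le self_mem_Iic hn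
  obtain ⟨k, rfl⟩ : ∃ k : ℤ, sp = k := by
    obtain ⟨l, rfl⟩ := Nat.exists_eq_add_one_of_ne_zero hn.ne'
    obtain ⟨m, c, hmc⟩ := hpieces l l.lt_succ_self
    exact ⟨m, hsp.eq_of_eqOn (htn ▸ ht l l.lt_succ_self) (htn ▸ hmc)⟩
  have h1S := hconv.isSupportingSlope_of_hasRightSlope ⟨le_rfl, hp⟩ hs1
  have hpS := hconv.isSupportingSlope_of_hasLeftSlope ⟨hp, le_rfl⟩ hsp
  have hk_pos : s1 < 0 → 0 < k := fun hs1_neg => by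
    by_contra! hk
    have hmin : IsMinOn f (Icc 1 p) 1 := isMinOn_iff.2 fun z hz => by
      nlinarith [hpS z hz,
        mul_nonneg_of_nonpos_of_nonpos (Int.cast_nonpos.2 hk) (sub_nonpos.2 hz.2)]
    exact hs1_neg.not_ge (hs1.nonneg_of_isMinOn hp hmin)
  obtain ⟨s, hxS, hs1s, hsk⟩ := ConvexOn.exists_int_isSupportingSlope_of_partition hn ht
    (by rwa [ht0, htn]) hpieces (show x ∈ Icc (t 0) (t n) by rwa [ht0, htn])
  rw [ht0, htn] at hxS hs1s hsk
  exact exists_isMaxOn_phiF_sub_of_isSupportingSlope hp hx hfp h1S hpS hxS (hs1s _ h1S)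
    (by exact_mod_cast hsk _ hpS) hk_pos hN

/-- Every `f ∈ E_{N,p}` satisfies
`f(x) = max_{0 ≤ a ≤ N−p} (φ_a(x) + γ_a(f))` on `[1,p]`. -/
theorem statement15 (p N : ℕ)
    (f : ℝ → ℝ) (hf : ENp p N f) :
    ∀ x ∈ Set.Icc (1 : ℝ) p,
      f x = (Finset.range (N - p + 1)).sup' (by simp)
        (fun a => phiF p N a x + gammaF p N a f) := by
  intro x hx
  obtain ⟨a, ha, hmax⟩ := hf.exists_isMaxOn_phiF_sub hx
  refine le_antisymm ?_ (Finset.sup'_le _ _ fun b _ => phiF_add_gammaF_le hf.1 hx)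
  calc f x = phiF p N a x + gammaF p N a f := by rw [gammaF_eq_of_isMaxOn hx hmax]; ring
    _ ≤ _ := Finset.le_sup' (fun a => phiF p N a x + gammaF p N a f) ha
end

section
/- Let K be a semifield. If there exist u ∈ K and an integer n ≥ 1 with u^n = 1 and u ≠ 1, then 1 has an additive inverse in K, i.e. there exists b ∈ K with 1 + b = 0 (so that K is in fact a field). -/
/-! Without subtraction, `x - 1` cannot be factored off, but `s = 1 + u + ⋯ + u ^ (n - 1)` still
satisfies `u * s = s` when `u ^ n = 1`; cancelling `s` would give `u = 1`, so `s = 0`, and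
`u + ⋯ + u ^ (n - 1)` is an additive inverse of `1`. -/

open Finset

theorem mul_geom_sum_of_pow_eq_one {R : Type*} [Semiring R] {u : R} {n : ℕ} (hu : u ^ n = 1) :
    u * ∑ i ∈ range n, u ^ i = ∑ i ∈ range n, u ^ i := by
  cases n with
  | zero => simp
  | succ m =>
    calc u * ∑ i ∈ range (m + 1), u ^ i = u * (u ^ m + ∑ i ∈ range m, u ^ i) := by
          rw [geom_sum_succ']
      _ = u * ∑ i ∈ range m, u ^ i + 1 := by rw [mul_add, ← pow_succ', hu, add_comm]
      _ = ∑ i ∈ range (m + 1), u ^ i := geom_sum_succ.symm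

theorem geom_sum_eq_zero_of_pow_eq_one {R : Type*} [Semiring R] [IsRightCancelMulZero R] {u : R}
    {n : ℕ} (hu : u ^ n = 1) (hu₁ : u ≠ 1) : ∑ i ∈ range n, u ^ i = 0 := by
  by_contra hs
  exact hu₁ (mul_right_cancel₀ hs (by rw [mul_geom_sum_of_pow_eq_one hu, one_mul]))

/-- If a semifield contains a nontrivial root of unity, then `1` has an
additive inverse (so the semifield is in fact a field). -/
theorem semifield_field_of_root_of_unity (K : Type*) [Semifield K]
    (u : K) (n : ℕ) (hn : 1 ≤ n) (hu : u ^ n = 1) (hune : u ≠ 1) :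
    ∃ b : K, 1 + b = 0 := by
  obtain ⟨m, rfl⟩ := Nat.exists_eq_add_of_le' hn
  refine ⟨u * ∑ i ∈ range m, u ^ i, ?_⟩
  rw [add_comm, ← geom_sum_succ]
  exact geom_sum_eq_zero_of_pow_eq_one hu hune
end

section
/- Let K be a semifield whose multiplicative group of nonzero elements (equivalently, its group of units) is an infinite cyclic group. Then K is isomorphic as a semiring to the tropical semifield ℤ_max, i.e. the set ℤ ∪ {−∞} with addition given by (x, y) ↦ max(x, y) and multiplication given by (x, y) ↦ x + y (with −∞ absorbing for the multiplication and neutral for the addition). -/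
/-!
Let `g` generate `Kˣ ≅ ℤ`; as `Kˣ` is torsion-free, `1 + 1 = 1`. Indeed, if `1 + 1 = 0` the
relation `1 + g = gʲ` makes `g` or `g⁻¹` a root of `Xⁿ + X + 1` with `n ≥ 2`, so its powers lie in
a finite `𝔽₂`-span; if `K` has characteristic zero, `ℚ≥0 ⊆ K` and `2, 3` would be multiplicatively
dependent; otherwise `ℕ` has finitely many images in `K`, so the unit `2` has finite order.

In the idempotent semifield, `a = g⁻ʲ` and `b = g¹⁻ʲ` satisfy `a + b = 1`, which forces
`aᵐ + bⁿ = 1` for all `m, n`; taking `aᵐ = bⁿ` gives `aᵐ = 1`, whence `j ∈ {0, 1}`, i.e.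
`1 + g ∈ {1, g}`. Replacing `g` by `g⁻¹` if necessary, `1 + g = g`, so `gᵐ + gⁿ = g ^ max m n` and
`gⁿ ↦ n` is the isomorphism with `ℤ_max`.
-/

open Multiplicative

section Idempotent

variable {R : Type*}

theorem pow_add_eq_one_of_add_eq_one [CommSemiring R] (h1 : (1 : R) + 1 = 1) {a b : R}
    (hab : a + b = 1) (m : ℕ) : a ^ m + b = 1 := by
  have idem (x : R) : x + x = x := by rw [← mul_one x, ← mul_add, h1]
  have ha : 1 + a = 1 := by rw [← hab, add_right_comm, idem]
  induction m with
  | zero => rw [pow_zero, ← hab, add_assoc, idem]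
  | succ m ih =>
    calc a ^ (m + 1) + b = a ^ (m + 1) + (1 + a) * b := by rw [ha, one_mul]
      _ = a * (a ^ m + b) + b := by ring
      _ = 1 := by rw [ih, mul_one, hab]

theorem pow_add_pow_eq_one_of_add_eq_one [CommSemiring R] (h1 : (1 : R) + 1 = 1) {a b : R}
    (hab : a + b = 1) (m n : ℕ) : a ^ m + b ^ n = 1 := by
  rw [add_comm]
  exact pow_add_eq_one_of_add_eq_one h1
    (by rw [add_comm]; exact pow_add_eq_one_of_add_eq_one h1 hab m) n

theorem one_add_pow_eq_pow [Semiring R] (h1 : (1 : R) + 1 = 1) {x : R} (hx : 1 + x = x)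
    (n : ℕ) : 1 + x ^ n = x ^ n := by
  induction n with
  | zero => rwa [pow_zero]
  | succ n ih =>
    calc 1 + x ^ (n + 1) = 1 + x * (1 + x ^ n) := by rw [ih, pow_succ']
      _ = (1 + x) + x * x ^ n := by rw [mul_add, mul_one, add_assoc]
      _ = x * (1 + x ^ n) := by rw [hx, mul_add, mul_one]
      _ = x ^ (n + 1) := by rw [ih, pow_succ']

end Idempotent

theorem one_add_inv_eq_inv_zpow {K : Type*} [Semifield K] {x : K} (hx : x ≠ 0) {j : ℤ}
    (h : 1 + x = x ^ j) : 1 + x⁻¹ = x⁻¹ ^ (1 - j) := by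
  rw [inv_zpow', neg_sub, zpow_sub_one₀ hx, ← h, add_mul, one_mul, mul_inv_cancel₀ hx, add_comm]

theorem finite_range_pow_of_pow_eq_one_add {R : Type*} [Semiring R] (h2 : (1 : R) + 1 = 0)
    {x : R} {n : ℕ} (hn : 1 < n) (hx : x ^ n = 1 + x) : (Set.range (x ^ · : ℕ → R)).Finite := by
  let _ : Module (ZMod 2) R := AddCommMonoid.zmodModule fun y => by
    rw [two_nsmul, ← mul_one y, ← mul_add, h2, mul_zero]
  let V := Submodule.span (ZMod 2) (Set.range fun i : Fin n => x ^ (i : ℕ))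
  have hgen : ∀ i < n, x ^ i ∈ V := fun i hi => Submodule.subset_span ⟨⟨i, hi⟩, rfl⟩
  have hmul : ∀ v ∈ V, x * v ∈ V := by
    intro v hv
    induction hv using Submodule.span_induction with
    | mem v hv =>
      obtain ⟨i, rfl⟩ := hv
      rw [← pow_succ']
      rcases (Nat.succ_le_of_lt i.2).lt_or_eq with h | h
      · exact hgen _ h
      · rw [show (i : ℕ) + 1 = n from h, hx]
        exact V.add_mem (by simpa using hgen 0 (by omega)) (by simpa using hgen 1 hn)
    | zero => simp
    | add a b _ _ ha hb => rw [mul_add]; exact V.add_mem ha hb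
    | smul c v _ hv =>
      show x * (c.val • v) ∈ V
      rw [mul_smul_comm]
      exact nsmul_mem hv _
  have hpow : ∀ k, x ^ k ∈ V := by
    intro k
    induction k with
    | zero => simpa using hgen 0 (by omega)
    | succ k ih => rw [pow_succ']; exact hmul _ ih
  have : Module.Finite (ZMod 2) V := Module.Finite.span_of_finite _ (Set.finite_range _)
  have : Finite V := Module.finite_of_finite (ZMod 2)
  exact (V : Set R).toFinite.subset (Set.range_subset_iff.2 hpow)

theorem finite_range_natCast_of_not_charZero {R : Type*} [AddMonoidWithOne R]
    (h : ¬ CharZero R) : (Set.range (Nat.cast : ℕ → R)).Finite := by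
  obtain ⟨a, b, hab, hcast⟩ : ∃ a b : ℕ, a < b ∧ (a : R) = b := by
    by_contra! hne
    exact h ⟨fun a b hab => by
      rcases lt_trichotomy a b with h | h | h
      · exact absurd hab (hne a b h)
      · exact h
      · exact absurd hab.symm (hne b a h)⟩
  refine ((Set.finite_Iio b).image Nat.cast).subset (Set.range_subset_iff.2 fun k => ?_)
  induction k using Nat.strong_induction_on with
  | _ k ih =>
    rcases lt_or_ge k b with hk | hk
    · exact ⟨k, hk, rfl⟩
    · have hk' : (k : R) = ((k - b + a : ℕ) : R) := by
        rw [Nat.cast_add, hcast, ← Nat.cast_add, Nat.sub_add_cancel hk]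
      rw [hk']
      exact ih _ (by omega)

theorem Units.eq_one_of_finite_range_pow {M : Type*} [Monoid M] [IsMulTorsionFree Mˣ] {u : Mˣ}
    (h : (Set.range fun n : ℕ => (u : M) ^ n).Finite) : u = 1 := by
  by_contra hu
  refine Set.infinite_range_of_injective (fun k l hkl => ?_) h
  exact IsMulTorsionFree.pow_right_injective hu (Units.ext (by simpa using hkl))

theorem eq_zero_of_two_zpow_eq_three_zpow {K : Type*} [DivisionSemiring K] [CharZero K]
    {m n : ℤ} (h : (2 : K) ^ m = (3 : K) ^ n) : m = 0 ∧ n = 0 := by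
  have hQ : ((2 : ℕ) : ℚ) ^ m = ((3 : ℕ) : ℚ) ^ n := by
    have : ((2 : ℚ≥0) ^ m : ℚ≥0) = (3 : ℚ≥0) ^ n := NNRat.cast_injective (α := K) (by simpa using h)
    simpa using congrArg ((↑) : ℚ≥0 → ℚ) this
  have hval {p q : ℕ} [Fact p.Prime] (hpq : ¬ p ∣ q) : padicValRat p q = 0 := by
    rw [padicValRat.of_nat, padicValNat.eq_zero_of_not_dvd hpq, Nat.cast_zero]
  have : Fact (Nat.Prime 3) := ⟨Nat.prime_three⟩
  have h2 := congrArg (padicValRat 2) hQ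
  have h3 := congrArg (padicValRat 3) hQ
  rw [padicValRat.zpow, padicValRat.zpow, padicValRat.self one_lt_two, hval (by norm_num)] at h2
  rw [padicValRat.zpow, padicValRat.zpow, padicValRat.self (by norm_num), hval (by norm_num)] at h3
  constructor <;> linarith

theorem eq_zero_or_eq_one_of_one_add_eq_zpow {K : Type*} [Semifield K] [IsMulTorsionFree Kˣ]
    (h1 : (1 : K) + 1 = 1) {g : Kˣ} (hg : g ≠ 1) {j : ℤ} (hj : 1 + (g : K) = (g : K) ^ j) :
    j = 0 ∨ j = 1 := by
  have hx : (g : K) ≠ 0 := g.ne_zero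
  have hab : (g : K) ^ (-j) + (g : K) ^ (1 - j) = 1 := by
    rw [sub_eq_neg_add, zpow_add₀ hx, zpow_one, ← mul_one_add, hj, ← zpow_add₀ hx,
      neg_add_cancel, zpow_zero]
  have hpow : ((g : K) ^ (-j)) ^ (j - 1).natAbs = ((g : K) ^ (1 - j)) ^ j.natAbs := by
    simp only [← zpow_natCast, ← zpow_mul]
    congr 1
    rcases le_or_gt 1 j with h | h
    · rw [Int.natAbs_of_nonneg (by omega), Int.natAbs_of_nonneg (by omega)]; ring
    · rw [Int.ofNat_natAbs_of_nonpos (by omega), Int.ofNat_natAbs_of_nonpos (by omega)]; ring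
  have hone : ((g : K) ^ (-j)) ^ (j - 1).natAbs = 1 := by
    rw [← pow_add_pow_eq_one_of_add_eq_one h1 hab (j - 1).natAbs j.natAbs, ← hpow,
      ← mul_one (_ ^ _), ← mul_add, h1]
  have : g ^ (-j * (j - 1).natAbs) = 1 := by
    rw [← Units.val_eq_one, zpow_mul, Units.val_zpow_eq_zpow_val, ← hone]
    norm_cast
  rw [IsMulTorsionFree.zpow_eq_one_iff_right hg] at this
  rcases mul_eq_zero.1 this with h | h <;> omega

theorem one_add_ne_pow_of_one_add_one_eq_zero {K : Type*} [Semifield K] [IsMulTorsionFree Kˣ]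
    (h2 : (1 : K) + 1 = 0) {x : Kˣ} (hx : x ≠ 1) {n : ℕ} (hn : n ≠ 1) :
    1 + (x : K) ≠ (x : K) ^ n := by
  intro h
  rcases Nat.lt_or_gt_of_ne hn with hn | hn
  · rw [Nat.lt_one_iff.1 hn, pow_zero] at h
    apply x.ne_zero
    rw [← zero_add (x : K), ← h2, add_assoc, h, h2]
  · exact hx (Units.eq_one_of_finite_range_pow (finite_range_pow_of_pow_eq_one_add h2 hn h.symm))

theorem isMulTorsionFree_of_mulEquivInt {G : Type*} [Monoid G] (ψ : G ≃* Multiplicative ℤ) :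
    IsMulTorsionFree G :=
  Function.Injective.isMulTorsionFree ψ.toMonoidHom ψ.injective

section UnitsEquivInt

variable {K : Type*} [Semifield K] (ψ : Kˣ ≃* Multiplicative ℤ)

theorem exists_zpow_symm_ofAdd_one_eq {x : K} (hx : x ≠ 0) :
    ∃ j : ℤ, ((ψ.symm (ofAdd 1) : Kˣ) : K) ^ j = x := by
  refine ⟨toAdd (ψ (Units.mk0 x hx)), ?_⟩
  rw [← Units.val_zpow_eq_zpow_val, ← map_zpow, ← ofAdd_zsmul, smul_eq_mul, mul_one, ofAdd_toAdd,
    MulEquiv.symm_apply_apply, Units.val_mk0]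

include ψ in
theorem one_add_one_ne_zero_of_mulEquivInt : (1 : K) + 1 ≠ 0 := by
  have := isMulTorsionFree_of_mulEquivInt ψ
  intro h2
  set g := ψ.symm (ofAdd 1)
  have hg : g ≠ 1 := by simp [g]
  have h1g : 1 + (g : K) ≠ 0 := by
    intro h
    apply hg
    rw [← Units.val_eq_one, ← zero_add (g : K), ← h2, add_assoc, h, add_zero]
  obtain ⟨j, hj⟩ := exists_zpow_symm_ofAdd_one_eq ψ h1g
  by_cases hj1 : j ≠ 1 ∧ 0 ≤ j
  · refine one_add_ne_pow_of_one_add_one_eq_zero h2 hg (n := j.toNat) (by omega) ?_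
    rw [← zpow_natCast, Int.toNat_of_nonneg hj1.2, hj]
  · refine one_add_ne_pow_of_one_add_one_eq_zero h2 (inv_ne_one.2 hg) (n := (1 - j).toNat)
      (by omega) ?_
    rw [Units.val_inv_eq_inv_val, ← zpow_natCast, Int.toNat_of_nonneg (by omega)]
    exact one_add_inv_eq_inv_zpow g.ne_zero hj.symm

include ψ in
theorem not_charZero_of_mulEquivInt : ¬ CharZero K := by
  intro _
  set u₂ := Units.mk0 (2 : K) two_ne_zero
  set u₃ := Units.mk0 (3 : K) three_ne_zero
  have h : (2 : K) ^ toAdd (ψ u₃) = (3 : K) ^ toAdd (ψ u₂) := by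
    have : u₂ ^ toAdd (ψ u₃) = u₃ ^ toAdd (ψ u₂) := by
      apply ψ.injective
      rw [map_zpow, map_zpow, ← ofAdd_toAdd (ψ u₂), ← ofAdd_toAdd (ψ u₃), ← ofAdd_zsmul,
        ← ofAdd_zsmul, toAdd_ofAdd, toAdd_ofAdd, smul_eq_mul, smul_eq_mul, mul_comm]
    simpa [u₂, u₃] using congrArg Units.val this
  have hu₂ : u₂ = 1 := by
    apply ψ.injective
    rw [map_one, ← ofAdd_toAdd (ψ u₂), (eq_zero_of_two_zpow_eq_three_zpow h).2, ofAdd_zero]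
  exact OfNat.ofNat_ne_one 2 (congrArg Units.val hu₂)

include ψ in
theorem one_add_one_eq_one_of_mulEquivInt : (1 : K) + 1 = 1 := by
  have := isMulTorsionFree_of_mulEquivInt ψ
  have h2 : (2 : K) ≠ 0 := one_add_one_eq_two (R := K) ▸ one_add_one_ne_zero_of_mulEquivInt ψ
  have hfin : (Set.range fun n : ℕ => ((Units.mk0 (2 : K) h2 : Kˣ) : K) ^ n).Finite := by
    refine (finite_range_natCast_of_not_charZero (not_charZero_of_mulEquivInt ψ)).subset ?_
    rintro _ ⟨n, rfl⟩
    exact ⟨2 ^ n, by simp⟩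
  rw [one_add_one_eq_two]
  simpa using congrArg Units.val (Units.eq_one_of_finite_range_pow hfin)

include ψ in
theorem exists_mulEquiv_one_add_symm_ofAdd_one :
    ∃ φ : Kˣ ≃* Multiplicative ℤ, 1 + ((φ.symm (ofAdd 1) : Kˣ) : K) = φ.symm (ofAdd 1) := by
  have := isMulTorsionFree_of_mulEquivInt ψ
  set g := ψ.symm (ofAdd 1)
  have h1 := one_add_one_eq_one_of_mulEquivInt ψ
  have h1g : 1 + (g : K) ≠ 0 := fun h =>
    one_ne_zero (by rw [← add_zero (1 : K), ← h, ← add_assoc, h1])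
  obtain ⟨j, hj⟩ := exists_zpow_symm_ofAdd_one_eq ψ h1g
  rcases eq_zero_or_eq_one_of_one_add_eq_zpow h1 (by simp [g]) hj.symm with rfl | rfl
  · refine ⟨ψ.trans (MulEquiv.inv _), ?_⟩
    simpa using one_add_inv_eq_inv_zpow g.ne_zero hj.symm
  · exact ⟨ψ, by simpa using hj.symm⟩

variable {ψ} in
theorem units_add_eq_right_of_le (h1 : (1 : K) + 1 = 1)
    (hψ : 1 + ((ψ.symm (ofAdd 1) : Kˣ) : K) = ψ.symm (ofAdd 1)) {u v : Kˣ} (huv : ψ u ≤ ψ v) :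
    (u : K) + v = v := by
  obtain ⟨d, rfl⟩ : ∃ d : ℕ, u * ψ.symm (ofAdd 1) ^ d = v := by
    refine ⟨(toAdd (ψ v) - toAdd (ψ u)).toNat, ψ.injective (toAdd.injective ?_)⟩
    have : toAdd (ψ u) ≤ toAdd (ψ v) := huv
    simp only [map_mul, map_pow, MulEquiv.apply_symm_apply, toAdd_mul, toAdd_pow, toAdd_ofAdd,
      nsmul_eq_mul, mul_one, Int.ofNat_toNat]
    omega
  rw [Units.val_mul, Units.val_pow_eq_pow_val, ← mul_one_add, one_add_pow_eq_pow h1 hψ]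

open Classical in
noncomputable def logEquiv : K ≃ WithBot ℤ :=
  (WithZero.withZeroUnitsEquiv.symm.trans
    ((MulEquiv.withZero ψ).trans WithZero.toMulBot)).toEquiv.trans Multiplicative.toAdd

theorem logEquiv_zero : logEquiv ψ 0 = ⊥ := by
  simp [logEquiv]

theorem logEquiv_units (u : Kˣ) : logEquiv ψ u = toAdd (ψ u) := by
  simp [logEquiv]

theorem logEquiv_mul (x y : K) : logEquiv ψ (x * y) = logEquiv ψ x + logEquiv ψ y := by
  simp only [logEquiv, Equiv.trans_apply, MulEquiv.toEquiv_eq_coe, MulEquiv.coe_toEquiv, map_mul,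
    toAdd_mul]

variable {ψ} in
theorem logEquiv_add (h1 : (1 : K) + 1 = 1)
    (hψ : 1 + ((ψ.symm (ofAdd 1) : Kˣ) : K) = ψ.symm (ofAdd 1)) (x y : K) :
    logEquiv ψ (x + y) = max (logEquiv ψ x) (logEquiv ψ y) := by
  rcases eq_or_ne x 0 with rfl | hx
  · simp [logEquiv_zero]
  rcases eq_or_ne y 0 with rfl | hy
  · simp [logEquiv_zero]
  lift x to Kˣ using hx.isUnit
  lift y to Kˣ using hy.isUnit
  have hle {u v : Kˣ} (huv : ψ u ≤ ψ v) : logEquiv ψ u ≤ logEquiv ψ v := by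
    rw [logEquiv_units, logEquiv_units, WithBot.coe_le_coe]
    exact huv
  rcases le_total (ψ x) (ψ y) with h | h
  · rw [units_add_eq_right_of_le h1 hψ h, max_eq_right (hle h)]
  · rw [add_comm, units_add_eq_right_of_le h1 hψ h, max_eq_left (hle h)]

end UnitsEquivInt

/-- A semifield whose group of units is infinite cyclic is isomorphic as a
semiring to the tropical semifield `ℤ_max`, i.e. `ℤ ∪ {−∞}` (realized as `WithBot ℤ`) with
"addition" given by `max` and "multiplication" given by `+` (with `−∞ = ⊥` absorbing for the
multiplication and neutral for the addition). -/
theorem semifield_units_infinite_cyclic_iso_Zmax (K : Type*) [Semifield K]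
    (h : Nonempty (Kˣ ≃* Multiplicative ℤ)) :
    ∃ e : K ≃ WithBot ℤ,
      e 0 = ⊥ ∧ e 1 = ((0 : ℤ) : WithBot ℤ) ∧
      (∀ x y : K, e (x + y) = max (e x) (e y)) ∧
      (∀ x y : K, e (x * y) = e x + e y) := by
  obtain ⟨ψ⟩ := h
  obtain ⟨φ, hφ⟩ := exists_mulEquiv_one_add_symm_ofAdd_one ψ
  refine ⟨logEquiv φ, logEquiv_zero φ, ?_, logEquiv_add (one_add_one_eq_one_of_mulEquivInt ψ) hφ,
    logEquiv_mul φ⟩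
  simpa using logEquiv_units φ 1
end
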